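/- arXiv:2301.13026 — 6 statements merged into one kernel-verified Lean document; each statement's English description precedes it below -/
import Mathlib

section
/- Let 0 < β < α ≤ 1, 1 ≤ γ < ∞, and Ω ⊊ ℝ^N open. For every continuous function u vanishing on ∂Ω and outside Ω, with u ∈ L^γ(Ω) and finite C^{0,α} seminorm, one has [u]_{C^{0,β}} ≤ C₁ ‖u‖_{L^γ}^θ [u]_{C^{0,α}}^{1-θ} with θ = (α-β)/(α + N/γ), for a constant C₁ depending only on N, α, β, γ. -/
/-!
Write `K = [u]_α` and `L = ‖u‖_{L^γ}`. A segment from a point of `Ω` to a point outside meets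
`∂Ω`, where `u = 0`; hence `‖u‖` is `α`-Hölder with constant `K` on the whole space. On the ball
of radius `ρ` with `K ρ^α = |u x| / 2` we then have `|u| ≥ |u x| / 2`, and comparing with `L`
gives `‖u‖_∞ ≲ L^θ₀ K^(1-θ₀)` with `θ₀ = α / (α + N/γ)`. Finally the oscillation of `u` over
two points at distance `d` is at most `min (K d^α) (2 ‖u‖_∞)`, and the geometric mean of these
two bounds with weights `β/α` and `1 - β/α` is the claimed `β`-Hölder bound.
-/

open Set Metric MeasureTheory

noncomputable def holderSem {N : ℕ} (α : ℝ) (S : Set (EuclideanSpace ℝ (Fin N)))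
    (u : EuclideanSpace ℝ (Fin N) → ℝ) : ENNReal :=
  ⨆ x ∈ S, ⨆ y ∈ S, ENNReal.ofReal (|u x - u y| / ‖x - y‖ ^ α)

open scoped ENNReal NNReal

theorem holderSem_le_coe_iff_holderOnWith {N : ℕ} {r : ℝ≥0}
    {S : Set (EuclideanSpace ℝ (Fin N))} {u : EuclideanSpace ℝ (Fin N) → ℝ} {C : ℝ≥0} :
    holderSem r S u ≤ C ↔ HolderOnWith C r u S := by
  simp only [holderSem, iSup₂_le_iff]
  refine forall₂_congr fun x _ => forall₂_congr fun y _ => ?_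
  rcases eq_or_ne x y with rfl | hxy
  · simp
  have hd : 0 < ‖x - y‖ ^ (r : ℝ) := by
    have := norm_pos_iff.2 (sub_ne_zero.2 hxy)
    positivity
  rw [edist_dist, edist_dist, Real.dist_eq, dist_eq_norm,
    ENNReal.ofReal_rpow_of_nonneg (norm_nonneg _) r.coe_nonneg, ← ENNReal.ofReal_coe_nnreal,
    ← ENNReal.ofReal_mul C.coe_nonneg, ENNReal.ofReal_le_ofReal_iff (by positivity),
    ENNReal.ofReal_le_ofReal_iff (by positivity), div_le_iff₀ hd]

theorem HolderWith.of_dist_le {X Y : Type*} [PseudoMetricSpace X] [PseudoMetricSpace Y]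
    {C r : ℝ≥0} {f : X → Y} (h : ∀ x y, dist (f x) (f y) ≤ C * dist x y ^ (r : ℝ)) :
    HolderWith C r f := fun x y => by
  rw [edist_dist, edist_dist, ← ENNReal.ofReal_coe_nnreal,
    ENNReal.ofReal_rpow_of_nonneg dist_nonneg r.coe_nonneg, ← ENNReal.ofReal_mul C.coe_nonneg]
  exact ENNReal.ofReal_le_ofReal (h x y)

theorem HolderOnWith.of_le_of_edist_le {X Y : Type*} [PseudoEMetricSpace X]
    [PseudoEMetricSpace Y] {C D r s : ℝ≥0} {f : X → Y} {A : Set X} (hf : HolderOnWith C r f A)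
    (hD : ∀ x ∈ A, ∀ y ∈ A, edist (f x) (f y) ≤ D) (hr : 0 < r) (hsr : s ≤ r) :
    HolderOnWith (C ^ ((s : ℝ) / r) * D ^ (1 - (s : ℝ) / r)) s f A := by
  have hD0 : HolderOnWith D 0 f A := fun x hx y hy => by simpa using hD x hx y hy
  have ht : s / r ≤ 1 := div_le_one_of_le₀ hsr zero_le
  convert hf.interpolate hD0 (add_tsub_cancel_of_le ht) using 3
  · rw [NNReal.coe_div]
  · rw [NNReal.coe_sub ht, NNReal.coe_div, NNReal.coe_one]
  · rw [zero_mul, add_zero, mul_div_cancel₀ _ hr.ne']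

theorem IsOpen.exists_mem_closure_diff_dist_le {E : Type*} [NormedAddCommGroup E]
    [NormedSpace ℝ E] {Ω : Set E} (hΩ : IsOpen Ω) {x y : E} (hx : x ∈ Ω) (hy : y ∉ Ω) :
    ∃ z ∈ closure Ω \ Ω, dist x z ≤ dist x y := by
  have hnot : ¬ segment ℝ x y ⊆ Ω := fun h => hy (h (right_mem_segment ℝ x y))
  obtain ⟨z, ⟨hzc, hzs⟩, hzΩ⟩ := not_subset.1 <| mt
    ((convex_segment x y).isPreconnected.subset_of_closure_inter_subset hΩ
      ⟨x, left_mem_segment ℝ x y, hx⟩) hnot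
  exact ⟨z, ⟨hzc, hzΩ⟩,
    by linarith [dist_add_dist_of_mem_segment hzs, dist_nonneg (x := z) (y := y)]⟩

theorem HolderOnWith.holderWith_norm_of_support_subset {E F : Type*} [NormedAddCommGroup E]
    [NormedSpace ℝ E] [NormedAddCommGroup F] {Ω : Set E} {u : E → F} {C r : ℝ≥0}
    (hu : HolderOnWith C r u (closure Ω)) (hΩ : IsOpen Ω) (hsupp : u.support ⊆ Ω) :
    HolderWith C r fun x => ‖u x‖ := by
  have hzero : ∀ w ∉ Ω, u w = 0 := fun w hw => Function.notMem_support.1 (mt (@hsupp w) hw)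
  have hnorm_sub : ∀ x y, ‖u x‖ - ‖u y‖ ≤ C * dist x y ^ (r : ℝ) := by
    intro x y
    by_cases hx : x ∈ Ω
    · by_cases hy : y ∈ Ω
      · calc ‖u x‖ - ‖u y‖ ≤ dist (u x) (u y) := by
              rw [dist_eq_norm]; exact norm_sub_norm_le _ _
          _ ≤ C * dist x y ^ (r : ℝ) := hu.dist_le (subset_closure hx) (subset_closure hy)
      · obtain ⟨z, ⟨hzc, hzΩ⟩, hz⟩ := hΩ.exists_mem_closure_diff_dist_le hx hy
        calc ‖u x‖ - ‖u y‖ = dist (u x) (u z) := by simp [hzero _ hy, hzero _ hzΩ]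
          _ ≤ C * dist x z ^ (r : ℝ) := hu.dist_le (subset_closure hx) hzc
          _ ≤ C * dist x y ^ (r : ℝ) := by gcongr
    · rw [hzero x hx, norm_zero, zero_sub]
      exact (neg_nonpos.2 (norm_nonneg _)).trans (by positivity)
  refine HolderWith.of_dist_le fun x y => ?_
  rw [Real.dist_eq]
  exact abs_sub_le_iff.2 ⟨hnorm_sub x y, by simpa only [dist_comm] using hnorm_sub y x⟩

theorem HolderWith.nnnorm_div_two_le_of_mem_ball {X F : Type*} [PseudoMetricSpace X]
    [NormedAddCommGroup F] {K r : ℝ≥0} {f : X → F} (hf : HolderWith K r f) {x y : X} {ρ : ℝ≥0}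
    (hρ : K * ρ ^ (r : ℝ) ≤ ‖f x‖₊ / 2) (hy : y ∈ ball x ρ) : ‖f x‖₊ / 2 ≤ ‖f y‖₊ := by
  have hxy : ‖f x - f y‖₊ ≤ ‖f x‖₊ / 2 := by
    rw [← nndist_eq_nnnorm]
    exact (hf.nndist_le_of_le
      (NNReal.coe_le_coe.1 (by rw [coe_nndist]; exact (mem_ball'.1 hy).le))).trans hρ
  have htri : ‖f x‖₊ ≤ ‖f y‖₊ + ‖f x‖₊ / 2 :=
    (nnnorm_le_nnnorm_add_nnnorm_sub' (f x) (f y)).trans (add_le_add_right hxy _)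
  nth_rw 1 [← add_halves ‖f x‖₊] at htri
  exact le_of_add_le_add_right htri

theorem MeasureTheory.coe_mul_measure_rpow_le_eLpNorm {X F : Type*} [MeasurableSpace X]
    [NormedAddCommGroup F] {μ : Measure X} {p : ℝ≥0∞} (hp0 : p ≠ 0) (hp : p ≠ ⊤) {f : X → F}
    {s : Set X} (hs : MeasurableSet s) {a : ℝ≥0} (h : ∀ x ∈ s, a ≤ ‖f x‖₊) :
    (a : ℝ≥0∞) * μ s ^ (1 / p.toReal) ≤ eLpNorm f p μ := by
  calc (a : ℝ≥0∞) * μ s ^ (1 / p.toReal) = eLpNorm (s.indicator fun _ => (a : ℝ)) p μ := by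
        rw [eLpNorm_indicator_const hs hp0 hp]; simp
    _ ≤ eLpNorm f p μ := eLpNorm_mono_nnnorm fun x => by
        by_cases hx : x ∈ s
        · simpa [hx] using h x hx
        · simp [hx]

-- The theorem's `θ` is `holderLpExponent N α β γ`; with `s = 0` it is the exponent `θ₀` of the
-- sup-norm bound.
noncomputable def holderLpExponent (n : ℕ) (r s : ℝ≥0) (γ : ℝ) : ℝ := (r - s) / (r + n / γ)

theorem holderLpExponent_nonneg (n : ℕ) {r s : ℝ≥0} (hsr : s ≤ r) {γ : ℝ} (hγ : 0 ≤ γ) :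
    0 ≤ holderLpExponent n r s γ :=
  div_nonneg (sub_nonneg.2 (NNReal.coe_le_coe.2 hsr)) (by positivity)

theorem holderLpExponent_lt_one (n : ℕ) (r : ℝ≥0) {s : ℝ≥0} (hs : 0 < s) {γ : ℝ}
    (hγ : 0 ≤ γ) :
    holderLpExponent n r s γ < 1 := by
  have hnγ : 0 ≤ (n : ℝ) / γ := by positivity
  rcases (add_nonneg r.coe_nonneg hnγ).eq_or_lt with h | h
  · simp [holderLpExponent, ← h]
  · exact (div_lt_one h).2 (by linarith [NNReal.coe_pos.2 hs])

noncomputable def holderLpConst {E : Type*} [NormedAddCommGroup E] [NormedSpace ℝ E]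
    [MeasurableSpace E] (μ : Measure E) (r s : ℝ≥0) (p : ℝ≥0∞) : ℝ≥0 :=
  (4 / (μ (ball 0 1)).toNNReal ^
    (holderLpExponent (Module.finrank ℝ E) r 0 p.toReal / p.toReal)) ^ (1 - (s : ℝ) / r)

theorem holderLpConst_pos {E : Type*} [NormedAddCommGroup E] [NormedSpace ℝ E]
    [FiniteDimensional ℝ E] [MeasurableSpace E] (μ : Measure E) [μ.IsAddHaarMeasure]
    (r s : ℝ≥0) (p : ℝ≥0∞) : 0 < holderLpConst μ r s p :=
  NNReal.rpow_pos (div_pos (by norm_num) (NNReal.rpow_pos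
    (ENNReal.toNNReal_pos (measure_ball_pos μ 0 one_pos).ne' measure_ball_lt_top.ne)))

section Haar

variable {E F : Type*} [NormedAddCommGroup E] [NormedSpace ℝ E] [FiniteDimensional ℝ E]
  [MeasurableSpace E] [BorelSpace E] (μ : Measure E) [μ.IsAddHaarMeasure] [NormedAddCommGroup F]

theorem HolderWith.mul_rpow_le_toNNReal_eLpNorm {f : E → F} {K r : ℝ≥0}
    (hf : HolderWith K r f) {p : ℝ≥0∞} (hp0 : p ≠ 0) (hp : p ≠ ⊤) (hfp : eLpNorm f p μ ≠ ⊤)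
    {x : E} {ρ : ℝ≥0} (hρ0 : 0 < ρ) (hρ : K * ρ ^ (r : ℝ) ≤ ‖f x‖₊ / 2) :
    K * (μ (ball 0 1)).toNNReal ^ (1 / p.toReal) *
        ρ ^ ((r : ℝ) + Module.finrank ℝ E / p.toReal) ≤ (eLpNorm f p μ).toNNReal := by
  set n := Module.finrank ℝ E
  set c := (μ (ball 0 1)).toNNReal
  have hmass := coe_mul_measure_rpow_le_eLpNorm (μ := μ) hp0 hp measurableSet_ball
    fun _ => hf.nnnorm_div_two_le_of_mem_ball hρ
  have hvol : μ (ball x ρ) = ((ρ ^ n * c : ℝ≥0) : ℝ≥0∞) := by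
    rw [Measure.addHaar_ball_of_pos μ x (NNReal.coe_pos.2 hρ0), ENNReal.coe_mul,
      ENNReal.coe_toNNReal measure_ball_lt_top.ne, ← ENNReal.ofReal_coe_nnreal]
    push_cast
    rfl
  rw [hvol, ← ENNReal.coe_rpow_of_nonneg _ (by positivity), ← ENNReal.coe_mul,
    ← ENNReal.coe_toNNReal hfp, ENNReal.coe_le_coe] at hmass
  calc K * c ^ (1 / p.toReal) * ρ ^ ((r : ℝ) + n / p.toReal)
      = K * ρ ^ (r : ℝ) * (ρ ^ n * c) ^ (1 / p.toReal) := by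
        rw [NNReal.mul_rpow, ← NNReal.rpow_natCast, ← NNReal.rpow_mul, NNReal.rpow_add hρ0.ne']
        ring_nf
    _ ≤ ‖f x‖₊ / 2 * (ρ ^ n * c) ^ (1 / p.toReal) := by gcongr
    _ ≤ (eLpNorm f p μ).toNNReal := hmass

theorem HolderWith.nnnorm_le_eLpNorm_rpow_mul_rpow_div {f : E → F} {K r : ℝ≥0}
    (hf : HolderWith K r f) (hK : K ≠ 0) (hr : r ≠ 0) {p : ℝ≥0∞} (hp0 : p ≠ 0) (hp : p ≠ ⊤)
    (hfp : eLpNorm f p μ ≠ ⊤) (x : E) :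
    ‖f x‖₊ ≤
      2 * (eLpNorm f p μ).toNNReal ^ holderLpExponent (Module.finrank ℝ E) r 0 p.toReal *
        K ^ (1 - holderLpExponent (Module.finrank ℝ E) r 0 p.toReal) /
        (μ (ball 0 1)).toNNReal ^
          (holderLpExponent (Module.finrank ℝ E) r 0 p.toReal / p.toReal) := by
  set n := Module.finrank ℝ E
  set γ := p.toReal
  set θ := holderLpExponent n r 0 γ
  set L := (eLpNorm f p μ).toNNReal
  set c := (μ (ball 0 1)).toNNReal
  set a := ‖f x‖₊
  have hγ : 0 < γ := ENNReal.toReal_pos hp0 hp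
  have hc : 0 < c :=
    ENNReal.toNNReal_pos (measure_ball_pos μ 0 one_pos).ne' measure_ball_lt_top.ne
  rcases eq_or_ne a 0 with ha | ha
  · rw [ha]; exact zero_le
  obtain ⟨ρ, hρ0, hρ⟩ : ∃ ρ : ℝ≥0, 0 < ρ ∧ K * ρ ^ (r : ℝ) = a / 2 := by
    refine ⟨(a / (2 * K)) ^ (r : ℝ)⁻¹,
      NNReal.rpow_pos (div_pos (pos_iff_ne_zero.2 ha) (by positivity)), ?_⟩
    rw [← NNReal.rpow_mul, inv_mul_cancel₀ (NNReal.coe_ne_zero.2 hr), NNReal.rpow_one]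
    field_simp
  have hLρ := hf.mul_rpow_le_toNNReal_eLpNorm μ hp0 hp hfp hρ0 hρ.le
  have hexp : 0 < (r : ℝ) + n / γ := by positivity
  have hθ : θ = r / (r + n / γ) := by simp [θ, holderLpExponent]
  have hρL : ρ ^ ((r : ℝ) + n / γ) ≤ L / (K * c ^ (1 / γ)) := by
    rw [le_div_iff₀ (by positivity), mul_comm]
    exact hLρ
  calc a = 2 * (K * ρ ^ (r : ℝ)) := by rw [hρ]; ring
    _ = 2 * (K * (ρ ^ ((r : ℝ) + n / γ)) ^ θ) := by
        rw [← NNReal.rpow_mul, hθ, mul_div_cancel₀ _ hexp.ne']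
    _ ≤ 2 * (K * (L / (K * c ^ (1 / γ))) ^ θ) := by
        gcongr
        rw [hθ]
        positivity
    _ = 2 * L ^ θ * K ^ (1 - θ) / c ^ (θ / γ) := by
        rw [NNReal.div_rpow, NNReal.mul_rpow, ← NNReal.rpow_mul, NNReal.rpow_sub hK,
          NNReal.rpow_one, one_div_mul_eq_div]
        field_simp

theorem HolderOnWith.interpolate_eLpNorm {Ω : Set E} {u : E → F} {K r s : ℝ≥0}
    (hu : HolderOnWith K r u (closure Ω)) (hΩ : IsOpen Ω) (hsupp : u.support ⊆ Ω)
    (hs : 0 < s) (hsr : s ≤ r) {p : ℝ≥0∞} (hp0 : p ≠ 0) (hp : p ≠ ⊤)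
    (hup : eLpNorm u p μ ≠ ⊤) :
    HolderOnWith (holderLpConst μ r s p *
      (eLpNorm u p μ).toNNReal ^ holderLpExponent (Module.finrank ℝ E) r s p.toReal *
      K ^ (1 - holderLpExponent (Module.finrank ℝ E) r s p.toReal)) s u (closure Ω) := by
  set n := Module.finrank ℝ E
  set γ := p.toReal
  set θ₀ := holderLpExponent n r 0 γ
  set θ := holderLpExponent n r s γ
  set L := (eLpNorm u p μ).toNNReal
  have hr : 0 < r := hs.trans_le hsr
  rcases eq_or_ne K 0 with rfl | hK
  · rw [NNReal.zero_rpow (sub_pos.2 (holderLpExponent_lt_one n r hs ENNReal.toReal_nonneg)).ne',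
      mul_zero]
    exact fun x hx y hy => by simpa using hu x hx y hy
  set M := 2 * L ^ θ₀ * K ^ (1 - θ₀) / (μ (ball 0 1)).toNNReal ^ (θ₀ / γ)
  have hM : ∀ x, ‖u x‖₊ ≤ M := fun x => by
    simpa only [eLpNorm_norm, nnnorm_norm] using
      (hu.holderWith_norm_of_support_subset hΩ hsupp).nnnorm_le_eLpNorm_rpow_mul_rpow_div μ hK
        hr.ne' hp0 hp (by rwa [eLpNorm_norm]) x
  have hosc : ∀ x ∈ closure Ω, ∀ y ∈ closure Ω, edist (u x) (u y) ≤ ↑(2 * M) :=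
    fun x _ y _ => by
      rw [edist_nndist, ENNReal.coe_le_coe, nndist_eq_nnnorm, two_mul]
      exact (nnnorm_sub_le _ _).trans (add_le_add (hM x) (hM y))
  have hexpL : θ₀ * (1 - s / r) = θ := by
    simp only [θ₀, θ, holderLpExponent, NNReal.coe_zero, sub_zero]
    field_simp
  have hexpK : s / r + (1 - θ₀) * (1 - s / r) = 1 - θ := by rw [← hexpL]; ring
  have hC : K ^ ((s : ℝ) / r) * (2 * M) ^ (1 - (s : ℝ) / r) =
      holderLpConst μ r s p * L ^ θ * K ^ (1 - θ) := by
    rw [← hexpK, ← hexpL, holderLpConst, NNReal.rpow_add hK, NNReal.rpow_mul, NNReal.rpow_mul]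
    simp only [M, show (4 : ℝ≥0) = 2 * 2 by norm_num, NNReal.div_rpow, NNReal.mul_rpow]
    ring_nf
    rfl
  exact hC ▸ hu.of_le_of_edist_le hosc hr hsr

end Haar

theorem holder_interpolation_general {N : ℕ} (α β γ : ℝ)
    (hβ : 0 < β) (hβα : β < α) (hγ : 1 ≤ γ) :
    ∃ C₁ : ℝ, 0 < C₁ ∧
      ∀ (Ω : Set (EuclideanSpace ℝ (Fin N))) (u : EuclideanSpace ℝ (Fin N) → ℝ),
        IsOpen Ω → Ω ≠ Set.univ → Continuous u → (∀ x ∉ Ω, u x = 0) →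
        MeasureTheory.MemLp u (ENNReal.ofReal γ) (MeasureTheory.volume.restrict Ω) →
        holderSem α (closure Ω) u ≠ ⊤ →
        holderSem β (closure Ω) u ≤
          ENNReal.ofReal C₁ *
            (MeasureTheory.eLpNorm u (ENNReal.ofReal γ) (MeasureTheory.volume.restrict Ω)) ^
              ((α - β) / (α + (N : ℝ) / γ)) *
            (holderSem α (closure Ω) u) ^ (1 - (α - β) / (α + (N : ℝ) / γ)) := by
  lift α to ℝ≥0 using (hβ.trans hβα).le
  lift β to ℝ≥0 using hβ.le
  rw [NNReal.coe_pos] at hβ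
  rw [NNReal.coe_lt_coe] at hβα
  have hγ0 : 0 < γ := one_pos.trans_le hγ
  have hθ : holderLpExponent (Module.finrank ℝ (EuclideanSpace ℝ (Fin N))) α β
      (ENNReal.ofReal γ).toReal = (α - β) / (α + N / γ) := by
    rw [finrank_euclideanSpace_fin, ENNReal.toReal_ofReal hγ0.le, holderLpExponent]
  set μ : Measure (EuclideanSpace ℝ (Fin N)) := volume
  refine ⟨holderLpConst μ α β (ENNReal.ofReal γ), holderLpConst_pos μ α β _, ?_⟩
  intro Ω u hΩ _ _ hu0 hmem hfin
  have hsupp : u.support ⊆ Ω := fun x hx => by_contra fun h => hx (hu0 x h)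
  have hL := hmem.eLpNorm_ne_top
  rw [eLpNorm_restrict_eq_of_support_subset hsupp] at hL ⊢
  have hK := holderSem_le_coe_iff_holderOnWith.1 (ENNReal.coe_toNNReal hfin).ge
  calc holderSem β (closure Ω) u ≤ _ := holderSem_le_coe_iff_holderOnWith.2 <|
        hK.interpolate_eLpNorm μ hΩ hsupp hβ hβα.le (ENNReal.ofReal_pos.2 hγ0).ne'
          ENNReal.ofReal_ne_top hL
    _ = _ := by
        rw [ENNReal.coe_mul, ENNReal.coe_mul, ENNReal.ofReal_coe_nnreal,
          ENNReal.coe_rpow_of_nonneg _ (holderLpExponent_nonneg _ hβα.le ENNReal.toReal_nonneg),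
          ENNReal.coe_rpow_of_nonneg _
            (sub_nonneg.2 (holderLpExponent_lt_one _ _ hβ ENNReal.toReal_nonneg).le),
          ENNReal.coe_toNNReal hL, ENNReal.coe_toNNReal hfin, hθ]

/-- Interpolation estimate for Hölder seminorms: for `0 < β < α ≤ 1`, `1 ≤ γ < ∞`
there is a constant `C₁ = C₁(N, α, β, γ)` such that for every open `Ω ⊊ ℝ^N` and every
continuous `u` vanishing outside `Ω` (hence on `∂Ω`), belonging to `L^γ(Ω)` and with finite
`C^{0,α}` seminorm, one has
`[u]_{C^{0,β}} ≤ C₁ ‖u‖_{L^γ(Ω)}^θ [u]_{C^{0,α}}^{1-θ}` with `θ = (α-β)/(α+N/γ)`. -/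
theorem holder_interpolation {N : ℕ} (hN : 0 < N) (α β γ : ℝ)
    (hβ : 0 < β) (hβα : β < α) (hα1 : α ≤ 1) (hγ : 1 ≤ γ) :
    ∃ C₁ : ℝ, 0 < C₁ ∧
      ∀ (Ω : Set (EuclideanSpace ℝ (Fin N))) (u : EuclideanSpace ℝ (Fin N) → ℝ),
        IsOpen Ω → Ω ≠ Set.univ → Continuous u → (∀ x ∉ Ω, u x = 0) →
        MeasureTheory.MemLp u (ENNReal.ofReal γ) (MeasureTheory.volume.restrict Ω) →
        holderSem α (closure Ω) u ≠ ⊤ →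
        holderSem β (closure Ω) u ≤
          ENNReal.ofReal C₁ *
            (MeasureTheory.eLpNorm u (ENNReal.ofReal γ) (MeasureTheory.volume.restrict Ω)) ^
              ((α - β) / (α + (N : ℝ) / γ)) *
            (holderSem α (closure Ω) u) ^ (1 - (α - β) / (α + (N : ℝ) / γ)) :=
  holder_interpolation_general α β γ hβ hβα hγ
end

section
/- Let 0 < β < α ≤ 1, 1 ≤ γ < ∞, and Ω ⊊ ℝ^N open. For every continuous function u vanishing on ∂Ω and outside Ω, with u ∈ L^γ(Ω) and finite C^{0,α} seminorm, one has ‖u‖_{L^∞(Ω)} ≤ C₂ ‖u‖_{L^γ(Ω)}^χ [u]_{C^{0,α}}^{1-χ} with χ = α/(α + N/γ), for a constant C₂ depending only on N, α, γ. -/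
/-!
Hölder continuity on `closure Ω` extends to the whole space because `u` vanishes off `Ω`.
If `M = |u x₀| > 0` and `L` is the Hölder constant, then `|u| ≥ M / 2` on the ball of radius
`r` with `L r ^ α = M / 2`, so Chebyshev's inequality gives `(M / 2) ^ γ c r ^ N ≤ ‖u‖_γ ^ γ`,
where `c` is the volume of the unit ball. Substituting `r = (M / 2L) ^ (1 / α)` and solving
for `M` yields `M ≤ 2 c ^ (-χ / γ) ‖u‖_γ ^ χ L ^ (1 - χ)`.
-/

open Set Metric MeasureTheory

lemma abs_sub_le_toReal_holderSem_mul {N : ℕ} {α : ℝ} {S : Set (EuclideanSpace ℝ (Fin N))}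
    {u : EuclideanSpace ℝ (Fin N) → ℝ} (h : holderSem α S u ≠ ⊤) {x y : EuclideanSpace ℝ (Fin N)}
    (hx : x ∈ S) (hy : y ∈ S) : |u x - u y| ≤ (holderSem α S u).toReal * ‖x - y‖ ^ α := by
  rcases eq_or_ne x y with rfl | hxy
  · simp only [sub_self, abs_zero]
    positivity
  rw [← div_le_iff₀ (Real.rpow_pos_of_pos (norm_pos_iff.2 (sub_ne_zero.2 hxy)) α),
    ← ENNReal.ofReal_le_iff_le_toReal h]
  exact le_iSup₂_of_le x hx (le_iSup₂_of_le y hy le_rfl)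

section Extension

variable {E : Type*} [NormedAddCommGroup E] [NormedSpace ℝ E]

lemma IsOpen.exists_mem_closure_diff_norm_sub_le {Ω : Set E} (hΩ : IsOpen Ω) {x y : E}
    (hx : x ∈ Ω) (hy : y ∉ Ω) : ∃ z ∈ closure Ω \ Ω, ‖z - x‖ ≤ ‖y - x‖ := by
  by_contra! h
  have hseg : segment ℝ x y ⊆ Ω :=
    (convex_segment x y).isPreconnected.subset_of_closure_inter_subset hΩ
      ⟨x, left_mem_segment ℝ x y, hx⟩ fun z ⟨hzc, hzs⟩ =>
        by_contra fun hzΩ => (h z ⟨hzc, hzΩ⟩).not_ge (norm_sub_le_of_mem_segment hzs)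
  exact hy (hseg (right_mem_segment ℝ x y))

/-- A point outside `Ω` may be replaced by a closer point of `closure Ω \ Ω`, where `u`
vanishes too. -/
lemma abs_sub_le_of_forall_mem_closure {Ω : Set E} {u : E → ℝ} {α L : ℝ} (hΩ : IsOpen Ω)
    (hu0 : ∀ x ∉ Ω, u x = 0) (hα : 0 ≤ α) (hL : 0 ≤ L)
    (hHolder : ∀ x ∈ closure Ω, ∀ y ∈ closure Ω, |u x - u y| ≤ L * ‖x - y‖ ^ α) (x y : E) :
    |u x - u y| ≤ L * ‖x - y‖ ^ α := by
  have hmixed : ∀ x ∈ Ω, ∀ y ∉ Ω, |u x - u y| ≤ L * ‖x - y‖ ^ α := by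
    intro x hx y hy
    obtain ⟨z, ⟨hzc, hzΩ⟩, hzx⟩ := hΩ.exists_mem_closure_diff_norm_sub_le hx hy
    calc |u x - u y| = |u x - u z| := by rw [hu0 y hy, hu0 z hzΩ]
      _ ≤ L * ‖x - z‖ ^ α := hHolder x (subset_closure hx) z hzc
      _ ≤ L * ‖x - y‖ ^ α := by
        rw [norm_sub_rev x z, norm_sub_rev x y]
        gcongr
  by_cases hx : x ∈ Ω <;> by_cases hy : y ∈ Ω
  · exact hHolder x (subset_closure hx) y (subset_closure hy)
  · exact hmixed x hx y hy
  · rw [abs_sub_comm, norm_sub_rev]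
    exact hmixed y hy x hx
  · rw [hu0 x hx, hu0 y hy, sub_self, abs_zero]
    positivity

end Extension

noncomputable def interpolationExponent (α γ n : ℝ) : ℝ := α / (α + n / γ)

lemma interpolationExponent_mul_add {α γ n : ℝ} (hα : 0 < α) (hγ : 0 < γ) (hn : 0 ≤ n) :
    interpolationExponent α γ n * (α + n / γ) = α :=
  div_mul_cancel₀ α (by positivity)

lemma interpolationExponent_le_one {α γ n : ℝ} (hα : 0 < α) (hγ : 0 < γ) (hn : 0 ≤ n) :
    interpolationExponent α γ n ≤ 1 :=
  div_le_one_of_le₀ (le_add_of_nonneg_right (by positivity)) (by positivity)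

lemma interpolationExponent_nonneg {α γ n : ℝ} (hα : 0 < α) (hγ : 0 < γ) (hn : 0 ≤ n) :
    0 ≤ interpolationExponent α γ n :=
  div_nonneg hα.le (by positivity)

/-- After taking logarithms, the claim is the hypothesis multiplied by `χ / γ`, since
`χ (α + n / γ) = α`. -/
lemma mul_rpow_le_of_rpow_mul_le {α γ n L r c A : ℝ} (hα : 0 < α) (hγ : 0 < γ) (hn : 0 ≤ n)
    (hL : 0 < L) (hr : 0 < r) (hc : 0 < c) (hA₀ : 0 ≤ A)
    (h : (L * r ^ α) ^ γ * (r ^ n * c) ≤ A ^ γ) :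
    L * r ^ α ≤ c ^ (-(interpolationExponent α γ n / γ)) * A ^ interpolationExponent α γ n *
      L ^ (1 - interpolationExponent α γ n) := by
  set χ := interpolationExponent α γ n
  have hχ : χ * (α + n / γ) = α := interpolationExponent_mul_add hα hγ hn
  have hA : 0 < A := by
    refine hA₀.lt_of_ne' fun hA0 => ?_
    rw [hA0, Real.zero_rpow hγ.ne'] at h
    exact h.not_gt (by positivity)
  have hlog := Real.log_le_log (by positivity) h
  rw [← Real.log_le_log_iff (by positivity) (by positivity)]
  simp (disch := positivity) only [Real.log_mul, Real.log_rpow] at hlog ⊢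
  have hχγ : 0 ≤ χ / γ := div_nonneg (interpolationExponent_nonneg hα hγ hn) hγ.le
  have key := mul_le_mul_of_nonneg_left hlog hχγ
  field_simp at hχ key ⊢
  linear_combination key - Real.log r * hχ

lemma ball_subset_setOf_le_abs {E : Type*} [SeminormedAddCommGroup E] {u : E → ℝ} {α L r : ℝ}
    {x : E} (hα : 0 ≤ α) (hL : 0 ≤ L)
    (hHolder : ∀ y, |u x - u y| ≤ L * ‖x - y‖ ^ α) (hr : 2 * (L * r ^ α) ≤ |u x|) :
    ball x r ⊆ {y | L * r ^ α ≤ |u y|} := by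
  intro y hy
  have hdist : L * ‖x - y‖ ^ α ≤ L * r ^ α := by
    rw [← dist_eq_norm, dist_comm]
    gcongr
    exact (mem_ball.1 hy).le
  have htriangle := abs_sub_abs_le_abs_sub (u x) (u y)
  show L * r ^ α ≤ |u y|
  linarith [hHolder y]

lemma ofReal_rpow_mul_measure_ball_le {E : Type*} [SeminormedAddCommGroup E] [MeasurableSpace E]
    [OpensMeasurableSpace E] (μ : Measure E) {u : E → ℝ} {α γ L r : ℝ} {x : E} (hα : 0 ≤ α)
    (hγ : 0 < γ) (hL : 0 ≤ L) (hu : Continuous u)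
    (hHolder : ∀ y, |u x - u y| ≤ L * ‖x - y‖ ^ α) (hr : 2 * (L * r ^ α) ≤ |u x|) :
    ENNReal.ofReal (L * r ^ α) ^ γ * μ (ball x r) ≤ eLpNorm u (ENNReal.ofReal γ) μ ^ γ := by
  have hγ' : (ENNReal.ofReal γ).toReal = γ := ENNReal.toReal_ofReal hγ.le
  calc ENNReal.ofReal (L * r ^ α) ^ γ * μ (ball x r)
      ≤ ENNReal.ofReal (L * r ^ α) ^ γ * μ {y | ENNReal.ofReal (L * r ^ α) ≤ ‖u y‖ₑ} := by
        gcongr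
        intro y hy
        rw [mem_ofPred_eq, Real.enorm_eq_ofReal_abs]
        exact ENNReal.ofReal_le_ofReal (ball_subset_setOf_le_abs hα hL hHolder hr hy)
    _ ≤ eLpNorm u (ENNReal.ofReal γ) μ ^ γ := by
        simpa only [hγ'] using mul_meas_ge_le_pow_eLpNorm' μ (ENNReal.ofReal_pos.2 hγ).ne'
          ENNReal.ofReal_ne_top hu.aestronglyMeasurable _

lemma toReal_measure_ball_pos {E : Type*} [PseudoMetricSpace E] [ProperSpace E]
    [MeasurableSpace E] (μ : Measure E) [μ.IsOpenPosMeasure] [IsFiniteMeasureOnCompacts μ] (x : E)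
    {r : ℝ} (hr : 0 < r) : 0 < (μ (ball x r)).toReal :=
  ENNReal.toReal_pos (measure_ball_pos μ x hr).ne' measure_ball_lt_top.ne

section Haar

variable {E : Type*} [NormedAddCommGroup E] [NormedSpace ℝ E] [MeasurableSpace E] [BorelSpace E]
  [FiniteDimensional ℝ E] (μ : Measure E) [μ.IsAddHaarMeasure]

lemma abs_le_mul_toReal_eLpNorm_rpow_mul_rpow {u : E → ℝ} {α γ L : ℝ} (hα : 0 < α) (hγ : 0 < γ)
    (hL : 0 ≤ L) (hu : Continuous u) (hHolder : ∀ x y, |u x - u y| ≤ L * ‖x - y‖ ^ α)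
    (hzero : ∃ y, u y = 0) (hLp : eLpNorm u (ENNReal.ofReal γ) μ ≠ ⊤) (x : E) :
    |u x| ≤ 2 * (μ (ball 0 1)).toReal ^ (-(interpolationExponent α γ (Module.finrank ℝ E) / γ)) *
      (eLpNorm u (ENNReal.ofReal γ) μ).toReal ^ interpolationExponent α γ (Module.finrank ℝ E) *
      L ^ (1 - interpolationExponent α γ (Module.finrank ℝ E)) := by
  rcases (abs_nonneg (u x)).eq_or_lt with hM | hM
  · rw [← hM]
    positivity
  set M := |u x|
  set c := (μ (ball 0 1)).toReal
  set A := (eLpNorm u (ENNReal.ofReal γ) μ).toReal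
  have hLpos : 0 < L := by
    obtain ⟨y, hy⟩ := hzero
    refine hL.lt_of_ne' fun hL0 => ?_
    have hxy := hHolder x y
    rw [hy, sub_zero, hL0, zero_mul] at hxy
    exact hxy.not_gt hM
  set r := (M / (2 * L)) ^ α⁻¹
  have hr : 0 < r := by positivity
  have hrα : L * r ^ α = M / 2 := by
    rw [← Real.rpow_mul (by positivity), inv_mul_cancel₀ hα.ne', Real.rpow_one]
    field_simp
  have hc : 0 < c := toReal_measure_ball_pos μ 0 one_pos
  have hball := ofReal_rpow_mul_measure_ball_le μ hα.le hγ hL hu (hHolder x) (r := r) (by linarith)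
  rw [Measure.addHaar_ball_of_pos μ x hr, ← ENNReal.ofReal_toReal measure_ball_lt_top.ne,
    ← ENNReal.ofReal_toReal hLp, ENNReal.ofReal_rpow_of_nonneg (by positivity) hγ.le,
    ENNReal.ofReal_rpow_of_nonneg ENNReal.toReal_nonneg hγ.le, ← ENNReal.ofReal_mul (by positivity),
    ← ENNReal.ofReal_mul (by positivity), ENNReal.ofReal_le_ofReal_iff (by positivity),
    ← Real.rpow_natCast] at hball
  have hbound := mul_rpow_le_of_rpow_mul_le hα hγ (Nat.cast_nonneg _) hLpos hr hc
    ENNReal.toReal_nonneg hball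
  linarith

theorem eLpNorm_top_le_mul_eLpNorm_rpow_mul_rpow {u : E → ℝ} {α γ L : ℝ} (hα : 0 < α) (hγ : 0 < γ)
    (hL : 0 ≤ L) (hu : Continuous u) (hHolder : ∀ x y, |u x - u y| ≤ L * ‖x - y‖ ^ α)
    (hzero : ∃ y, u y = 0) (hLp : eLpNorm u (ENNReal.ofReal γ) μ ≠ ⊤) :
    eLpNorm u ⊤ μ ≤
      ENNReal.ofReal (2 * (μ (ball 0 1)).toReal ^
        (-(interpolationExponent α γ (Module.finrank ℝ E) / γ))) *
      eLpNorm u (ENNReal.ofReal γ) μ ^ interpolationExponent α γ (Module.finrank ℝ E) *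
      ENNReal.ofReal L ^ (1 - interpolationExponent α γ (Module.finrank ℝ E)) := by
  have hn : (0 : ℝ) ≤ Module.finrank ℝ E := Nat.cast_nonneg _
  have hχ0 := interpolationExponent_nonneg hα hγ hn
  have hχ1 := interpolationExponent_le_one hα hγ hn
  rw [eLpNorm_exponent_top, ← ENNReal.ofReal_toReal hLp,
    ENNReal.ofReal_rpow_of_nonneg ENNReal.toReal_nonneg hχ0,
    ENNReal.ofReal_rpow_of_nonneg hL (sub_nonneg.2 hχ1), ← ENNReal.ofReal_mul (by positivity),
    ← ENNReal.ofReal_mul (by positivity)]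
  exact eLpNormEssSup_le_of_ae_bound (ae_of_all _ fun x =>
    abs_le_mul_toReal_eLpNorm_rpow_mul_rpow μ hα hγ hL hu hHolder hzero hLp x)

end Haar

theorem sup_norm_interpolation_general {N : ℕ} (α β γ : ℝ)
    (hβ : 0 < β) (hβα : β < α) (hγ : 1 ≤ γ) :
    ∃ C₂ : ℝ, 0 < C₂ ∧
      ∀ (Ω : Set (EuclideanSpace ℝ (Fin N))) (u : EuclideanSpace ℝ (Fin N) → ℝ),
        IsOpen Ω → Ω ≠ Set.univ → Continuous u → (∀ x ∉ Ω, u x = 0) →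
        MeasureTheory.MemLp u (ENNReal.ofReal γ) (MeasureTheory.volume.restrict Ω) →
        holderSem α (closure Ω) u ≠ ⊤ →
        MeasureTheory.eLpNorm u ⊤ (MeasureTheory.volume.restrict Ω) ≤
          ENNReal.ofReal C₂ *
            (MeasureTheory.eLpNorm u (ENNReal.ofReal γ) (MeasureTheory.volume.restrict Ω)) ^
              (α / (α + (N : ℝ) / γ)) *
            (holderSem α (closure Ω) u) ^ (1 - α / (α + (N : ℝ) / γ)) := by
  have hα : 0 < α := hβ.trans hβα
  have hγ₀ : 0 < γ := by linarith
  have hc := toReal_measure_ball_pos (volume : Measure (EuclideanSpace ℝ (Fin N))) 0 one_pos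
  refine ⟨_, mul_pos two_pos (Real.rpow_pos_of_pos hc (-(α / (α + N / γ) / γ))), ?_⟩
  intro Ω u hΩ hΩ_ne hu hu₀ hLp hsem
  have hsupp : u.support ⊆ Ω := fun x hx => by_contra (hx ∘ hu₀ x)
  have hHolder := abs_sub_le_of_forall_mem_closure hΩ hu₀ hα.le ENNReal.toReal_nonneg
    fun x hx y hy => abs_sub_le_toReal_holderSem_mul hsem hx hy
  obtain ⟨y, hy⟩ := ne_univ_iff_exists_notMem Ω |>.1 hΩ_ne
  have hLp_ne_top := hLp.eLpNorm_ne_top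
  simp only [eLpNorm_restrict_eq_of_support_subset hsupp] at hLp_ne_top ⊢
  have hbound := eLpNorm_top_le_mul_eLpNorm_rpow_mul_rpow volume hα hγ₀ ENNReal.toReal_nonneg hu
    hHolder ⟨y, hu₀ y hy⟩ hLp_ne_top
  rwa [finrank_euclideanSpace_fin, ENNReal.ofReal_toReal hsem] at hbound

/-- Sup-norm interpolation estimate: for `0 < β < α ≤ 1`, `1 ≤ γ < ∞` there is a constant
`C₂ = C₂(N, α, γ)` such that for every open `Ω ⊊ ℝ^N` and every continuous `u` vanishing
outside `Ω` (hence on `∂Ω`), belonging to `L^γ(Ω)` and with finite `C^{0,α}` seminorm,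
one has `‖u‖_{L^∞(Ω)} ≤ C₂ ‖u‖_{L^γ(Ω)}^χ [u]_{C^{0,α}}^{1-χ}` with `χ = α/(α+N/γ)`. -/
theorem sup_norm_interpolation {N : ℕ} (hN : 0 < N) (α β γ : ℝ)
    (hβ : 0 < β) (hβα : β < α) (hα1 : α ≤ 1) (hγ : 1 ≤ γ) :
    ∃ C₂ : ℝ, 0 < C₂ ∧
      ∀ (Ω : Set (EuclideanSpace ℝ (Fin N))) (u : EuclideanSpace ℝ (Fin N) → ℝ),
        IsOpen Ω → Ω ≠ Set.univ → Continuous u → (∀ x ∉ Ω, u x = 0) →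
        MeasureTheory.MemLp u (ENNReal.ofReal γ) (MeasureTheory.volume.restrict Ω) →
        holderSem α (closure Ω) u ≠ ⊤ →
        MeasureTheory.eLpNorm u ⊤ (MeasureTheory.volume.restrict Ω) ≤
          ENNReal.ofReal C₂ *
            (MeasureTheory.eLpNorm u (ENNReal.ofReal γ) (MeasureTheory.volume.restrict Ω)) ^
              (α / (α + (N : ℝ) / γ)) *
            (holderSem α (closure Ω) u) ^ (1 - α / (α + (N : ℝ) / γ)) :=
  sup_norm_interpolation_general α β γ hβ hβα hγ
end

section
/- Let 0 < α < ∞ and let Ω ⊊ ℝ^N be open with ∫_Ω d_Ω^α dx < ∞, where d_Ω is the distance to ∂Ω. Then the inradius r_Ω of Ω is finite and satisfies r_Ω^{N+α} · N ω_N ∫₀¹ (1-ρ)^α ρ^{N-1} dρ ≤ ∫_Ω d_Ω^α dx, where ω_N is the volume of the unit ball. -/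
open Set Metric MeasureTheory

/-!
If `B_r(x₀) ⊆ Ω`, then `d_Ω(x) ≥ (r - |x - x₀|)₊` for every `x`, so `∫_Ω d_Ω^α` dominates the
integral of the cone `(r - |x - x₀|)₊^α`. Polar coordinates and the substitution `t = rρ` evaluate
that integral as `r^{N+α} · N ω_N ∫₀¹ (1-ρ)^α ρ^{N-1} dρ`, so every such `r` is at most
`(∫_Ω d_Ω^α / (N ω_N ∫₀¹ …))^{1/(N+α)}`, and hence so is the inradius.
-/

noncomputable def coneProfile (r α t : ℝ) : ℝ := max (r - t) 0 ^ α

theorem continuous_coneProfile {r α : ℝ} (hα : 0 ≤ α) : Continuous (coneProfile r α) :=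
  (Real.continuous_rpow_const hα).comp ((continuous_const.sub continuous_id).max continuous_const)

theorem coneProfile_of_le {r α t : ℝ} (hα : α ≠ 0) (h : r ≤ t) : coneProfile r α t = 0 := by
  rw [coneProfile, max_eq_right (sub_nonpos.2 h), Real.zero_rpow hα]

theorem coneProfile_mul {r α ρ : ℝ} (hr : 0 ≤ r) (hρ : ρ ≤ 1) :
    coneProfile r α (r * ρ) = r ^ α * (1 - ρ) ^ α := by
  have h : r - r * ρ = r * (1 - ρ) := by ring
  rw [coneProfile, h, max_eq_left (mul_nonneg hr (sub_nonneg.2 hρ)),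
    Real.mul_rpow hr (sub_nonneg.2 hρ)]

theorem sub_dist_le_infDist_compl {X : Type*} [PseudoMetricSpace X] {Ω : Set X}
    (hΩ : Ωᶜ.Nonempty) {x₀ : X} {r : ℝ} (h : ball x₀ r ⊆ Ω) (x : X) :
    r - dist x x₀ ≤ infDist x Ωᶜ :=
  (le_infDist hΩ).2 fun y hy => by
    have : r ≤ dist y x₀ := not_lt.1 fun hlt => hy (h hlt)
    linarith [dist_triangle_left y x₀ x]

theorem coneProfile_dist_le_infDist_compl_rpow {X : Type*} [PseudoMetricSpace X] {Ω : Set X}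
    (hΩ : Ωᶜ.Nonempty) {x₀ : X} {r α : ℝ} (hα : 0 ≤ α) (h : ball x₀ r ⊆ Ω) (x : X) :
    coneProfile r α (dist x x₀) ≤ infDist x Ωᶜ ^ α :=
  Real.rpow_le_rpow (le_max_right _ _)
    (max_le (sub_dist_le_infDist_compl hΩ h x) infDist_nonneg) hα

theorem integral_coneProfile_dist_le_setIntegral_infDist_compl_rpow {X : Type*}
    [PseudoMetricSpace X] [ProperSpace X] [MeasurableSpace X] [OpensMeasurableSpace X]
    {μ : Measure X} [IsFiniteMeasureOnCompacts μ] {Ω : Set X} (hΩ : Ωᶜ.Nonempty)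
    {x₀ : X} {r α : ℝ} (hα : 0 < α) (h : ball x₀ r ⊆ Ω)
    (hint : IntegrableOn (fun x => infDist x Ωᶜ ^ α) Ω μ) :
    ∫ x, coneProfile r α (dist x x₀) ∂μ ≤ ∫ x in Ω, infDist x Ωᶜ ^ α ∂μ := by
  have hvanish : ∀ x, x ∉ ball x₀ r → coneProfile r α (dist x x₀) = 0 := fun x hx =>
    coneProfile_of_le hα.ne' (not_lt.1 hx)
  have hcont : Continuous fun x => coneProfile r α (dist x x₀) :=
    (continuous_coneProfile hα.le).comp (continuous_id.dist continuous_const)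
  have hsupp : HasCompactSupport fun x => coneProfile r α (dist x x₀) :=
    HasCompactSupport.intro (isCompact_closedBall x₀ r) fun x hx =>
      hvanish x fun hb => hx (ball_subset_closedBall hb)
  rw [← setIntegral_eq_integral_of_forall_compl_eq_zero fun x hx => hvanish x fun hb => hx (h hb)]
  exact setIntegral_mono (hcont.integrable_of_hasCompactSupport hsupp).integrableOn hint
    (coneProfile_dist_le_infDist_compl_rpow hΩ hα.le h)

theorem setIntegral_Ioi_pow_mul_coneProfile {r α : ℝ} (hr : 0 < r) (hα : 0 < α) {n : ℕ}
    (hn : 0 < n) :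
    ∫ y in Ioi (0 : ℝ), y ^ (n - 1) * coneProfile r α y =
      r ^ ((n : ℝ) + α) * ∫ ρ in (0 : ℝ)..1, (1 - ρ) ^ α * ρ ^ (n - 1) := by
  have hsupp : ∫ y in Ioi (0 : ℝ), y ^ (n - 1) * coneProfile r α y =
      ∫ y in (0 : ℝ)..r, y ^ (n - 1) * coneProfile r α y := by
    rw [intervalIntegral.integral_of_le hr.le]
    refine setIntegral_eq_of_subset_of_forall_sdiff_eq_zero measurableSet_Ioi
      Ioc_subset_Ioi_self fun y hy => ?_
    have hry : r ≤ y := (not_le.1 fun h => hy.2 ⟨hy.1, h⟩).le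
    rw [coneProfile_of_le hα.ne' hry, mul_zero]
  have hscale : ∀ ρ ∈ uIcc (0 : ℝ) 1, (r * ρ) ^ (n - 1) * coneProfile r α (r * ρ) =
      r ^ ((n - 1 : ℕ) + α) * ((1 - ρ) ^ α * ρ ^ (n - 1)) := by
    intro ρ hρ
    rw [uIcc_of_le zero_le_one] at hρ
    rw [coneProfile_mul hr.le hρ.2, Real.rpow_add hr, Real.rpow_natCast]
    ring
  have hexp : ((n - 1 : ℕ) : ℝ) + α + 1 = n + α := by
    rw [Nat.cast_sub hn]; push_cast; ring
  have hsubst := intervalIntegral.smul_integral_comp_mul_left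
    (fun y => y ^ (n - 1) * coneProfile r α y) r (a := 0) (b := 1)
  rw [mul_zero, mul_one] at hsubst
  rw [hsupp, ← hsubst, intervalIntegral.integral_congr hscale, intervalIntegral.integral_const_mul, smul_eq_mul,
    ← mul_assoc, ← hexp, Real.rpow_add_one hr.ne']
  ring

theorem integral_coneProfile_dist {E : Type*} [NormedAddCommGroup E] [NormedSpace ℝ E]
    [FiniteDimensional ℝ E] [MeasurableSpace E] [BorelSpace E] [Nontrivial E]
    (μ : Measure E) [μ.IsAddHaarMeasure] (x₀ : E) {r α : ℝ} (hr : 0 < r) (hα : 0 < α) :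
    ∫ x, coneProfile r α (dist x x₀) ∂μ =
      r ^ ((Module.finrank ℝ E : ℝ) + α) * (Module.finrank ℝ E * μ.real (ball 0 1) *
        ∫ ρ in (0 : ℝ)..1, (1 - ρ) ^ α * ρ ^ (Module.finrank ℝ E - 1)) := by
  simp_rw [dist_eq_norm]
  rw [integral_sub_right_eq_self (fun x => coneProfile r α ‖x‖) x₀, integral_fun_norm_addHaar]
  simp only [smul_eq_mul, nsmul_eq_mul]
  rw [setIntegral_Ioi_pow_mul_coneProfile hr hα Module.finrank_pos]
  ring

theorem integral_one_sub_rpow_mul_pow_pos {α : ℝ} (hα : 0 ≤ α) (n : ℕ) :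
    0 < ∫ ρ in (0 : ℝ)..1, (1 - ρ) ^ α * ρ ^ n := by
  refine intervalIntegral.intervalIntegral_pos_of_pos_on ?_ (fun ρ hρ => ?_) one_pos
  · exact (((Real.continuous_rpow_const hα).comp (continuous_const.sub continuous_id)).mul
      (continuous_pow n)).intervalIntegrable 0 1
  · have : 0 < 1 - ρ := sub_pos.2 hρ.2
    have := hρ.1
    positivity

theorem bddAbove_and_csSup_rpow_mul_le {S : Set ℝ} {e C I : ℝ} (he : 0 < e) (hC : 0 < C)
    (hI : 0 ≤ I) (h0 : 0 ∈ S) (h : ∀ r ∈ S, 0 < r → r ^ e * C ≤ I) :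
    BddAbove S ∧ sSup S ^ e * C ≤ I := by
  have hIC : 0 ≤ I / C := div_nonneg hI hC.le
  have hbound : ∀ r ∈ S, r ≤ (I / C) ^ e⁻¹ := by
    intro r hr
    rcases le_or_gt r 0 with hr0 | hr0
    · exact hr0.trans (Real.rpow_nonneg hIC _)
    · rw [← Real.rpow_le_rpow_iff hr0.le (Real.rpow_nonneg hIC _) he,
        Real.rpow_inv_rpow hIC he.ne', le_div_iff₀ hC]
      exact h r hr hr0
  have hsup : sSup S ≤ (I / C) ^ e⁻¹ := csSup_le ⟨0, h0⟩ hbound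
  refine ⟨⟨_, hbound⟩, ?_⟩
  rw [← le_div_iff₀ hC, ← Real.rpow_inv_rpow hIC he.ne']
  exact Real.rpow_le_rpow (le_csSup ⟨_, hbound⟩ h0) hsup he.le

theorem inradius_bound_of_distance_integrable_general {N : ℕ} (hN : 0 < N) (α : ℝ) (hα : 0 < α)
    (Ω : Set (EuclideanSpace ℝ (Fin N))) (hne : Ω ≠ Set.univ)
    (hint : MeasureTheory.IntegrableOn (fun x => Metric.infDist x Ωᶜ ^ α) Ω) :
    BddAbove {r : ℝ | ∃ x₀ : EuclideanSpace ℝ (Fin N), Metric.ball x₀ r ⊆ Ω} ∧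
      sSup {r : ℝ | ∃ x₀ : EuclideanSpace ℝ (Fin N), Metric.ball x₀ r ⊆ Ω} ^ ((N : ℝ) + α) *
          ((N : ℝ) * (MeasureTheory.volume (Metric.ball (0 : EuclideanSpace ℝ (Fin N)) 1)).toReal *
            ∫ ρ in (0:ℝ)..1, (1 - ρ) ^ α * ρ ^ (N - 1)) ≤
        ∫ x in Ω, Metric.infDist x Ωᶜ ^ α := by
  have : Nontrivial (EuclideanSpace ℝ (Fin N)) := by
    rwa [← Module.finrank_pos_iff (R := ℝ), finrank_euclideanSpace_fin]
  have hvol : 0 < (volume (ball (0 : EuclideanSpace ℝ (Fin N)) 1)).toReal :=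
    ENNReal.toReal_pos (measure_ball_pos volume 0 one_pos).ne' measure_ball_lt_top.ne
  refine bddAbove_and_csSup_rpow_mul_le (by positivity)
    (by have := integral_one_sub_rpow_mul_pow_pos hα.le (N - 1); positivity)
    (integral_nonneg fun x => Real.rpow_nonneg infDist_nonneg α) ⟨0, by simp⟩ ?_
  rintro r ⟨x₀, hball⟩ hr
  have hcone := integral_coneProfile_dist volume x₀ hr hα
  rw [finrank_euclideanSpace_fin, measureReal_def] at hcone
  rw [← hcone]
  exact integral_coneProfile_dist_le_setIntegral_infDist_compl_rpow (nonempty_compl.2 hne) hα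
    hball hint

/-- If `Ω ⊊ ℝ^N` is open and `∫_Ω d_Ω^α < ∞`, then the inradius
`r_Ω = sup {r : ∃ x₀, B_r(x₀) ⊆ Ω}` is finite and satisfies
`r_Ω^{N+α} · N ω_N ∫₀¹ (1-ρ)^α ρ^{N-1} dρ ≤ ∫_Ω d_Ω^α dx`. -/
theorem inradius_bound_of_distance_integrable {N : ℕ} (hN : 0 < N) (α : ℝ) (hα : 0 < α)
    (Ω : Set (EuclideanSpace ℝ (Fin N))) (hΩ : IsOpen Ω) (hne : Ω ≠ Set.univ)
    (hint : MeasureTheory.IntegrableOn (fun x => Metric.infDist x Ωᶜ ^ α) Ω) :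
    BddAbove {r : ℝ | ∃ x₀ : EuclideanSpace ℝ (Fin N), Metric.ball x₀ r ⊆ Ω} ∧
      sSup {r : ℝ | ∃ x₀ : EuclideanSpace ℝ (Fin N), Metric.ball x₀ r ⊆ Ω} ^ ((N : ℝ) + α) *
          ((N : ℝ) * (MeasureTheory.volume (Metric.ball (0 : EuclideanSpace ℝ (Fin N)) 1)).toReal *
            ∫ ρ in (0:ℝ)..1, (1 - ρ) ^ α * ρ ^ (N - 1)) ≤
        ∫ x in Ω, Metric.infDist x Ωᶜ ^ α :=
  inradius_bound_of_distance_integrable_general hN α hα Ω hne hint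
end

section
/- Let Ω ⊊ ℝ^N be open with d_Ω^α ∈ L¹(ℝ^N) for some 0 < α < ∞ (d_Ω extended by zero outside Ω). Then for every R ≥ r_Ω/2 and every x with |x| > R + r_Ω/2, one has d_Ω(x) ≤ 2 (ω_N^{-1} ∫_{ℝ^N \ B_R} d_Ω^α dy)^{1/(N+α)}. In particular, ‖d_Ω‖_{L^∞(ℝ^N \ B_R)} → 0 as R → ∞, i.e. Ω is quasibounded. -/
/-!
If `d = infDist · Ωᶜ` equals `t > 0` at `x`, then `d ≥ t/2` on the ball `B(x, t/2)`, whose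
volume is `ω_N (t/2)^N`; hence `∫_{B(x, t/2)} d^α ≥ ω_N (t/2)^(N+α)`. When `|x| > R + r_Ω/2`
this ball lies outside `B_R`, which gives the pointwise bound, and the bound tends to zero
with `R` because the tails of an integrable function do.
-/

open Set Metric MeasureTheory Filter Topology Module

lemma sub_le_infDist_of_mem_ball {X : Type*} [PseudoMetricSpace X] {s : Set X} {x y : X}
    {r : ℝ} (hy : y ∈ ball x r) : infDist x s - r ≤ infDist y s := by
  have := infDist_le_infDist_add_dist (s := s) (x := x) (y := y)
  rw [mem_ball'] at hy
  linarith

lemma tendsto_setIntegral_compl_ball_atTop {X : Type*} [PseudoMetricSpace X]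
    [MeasurableSpace X] [OpensMeasurableSpace X] {μ : Measure X} {f : X → ℝ}
    (hf : Integrable f μ) (c : X) :
    Tendsto (fun R : ℝ ↦ ∫ y in (ball c R)ᶜ, f y ∂μ) atTop (𝓝 0) := by
  have hempty : ⋂ R : ℝ, (ball c R)ᶜ = ∅ := by
    rw [← compl_iUnion, compl_empty_iff, iUnion_eq_univ_iff]
    exact fun y ↦ ⟨dist y c + 1, by simp⟩
  simpa [hempty] using tendsto_setIntegral_of_antitone (s := fun R : ℝ ↦ (ball c R)ᶜ)
    (fun R ↦ measurableSet_ball.compl)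
    (fun _ _ h ↦ compl_subset_compl.2 (ball_subset_ball h)) ⟨0, hf.integrableOn⟩

section AddHaar

variable {E : Type*} [NormedAddCommGroup E] [NormedSpace ℝ E] [FiniteDimensional ℝ E]
  [MeasurableSpace E] [BorelSpace E] (μ : Measure E) [μ.IsAddHaarMeasure]

lemma const_mul_measureReal_ball_le_setIntegral {f : E → ℝ} {A : Set E}
    (hfA : IntegrableOn f A μ) (hf₀ : ∀ y ∈ A, 0 ≤ f y) (hA : MeasurableSet A) {x : E}
    {r c : ℝ} (hr : 0 < r) (hball : ball x r ⊆ A) (hc : ∀ y ∈ ball x r, c ≤ f y) :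
    c * (r ^ finrank ℝ E * μ.real (ball 0 1)) ≤ ∫ y in A, f y ∂μ := by
  have hvol : μ.real (ball x r) = r ^ finrank ℝ E * μ.real (ball 0 1) := by
    rw [measureReal_def, Measure.addHaar_ball_of_pos μ x hr, ENNReal.toReal_mul,
      ENNReal.toReal_ofReal (by positivity), measureReal_def]
  calc c * (r ^ finrank ℝ E * μ.real (ball 0 1)) = c * μ.real (ball x r) := by rw [hvol]
    _ ≤ ∫ y in ball x r, f y ∂μ :=
      setIntegral_ge_of_const_le_real measurableSet_ball measure_ball_lt_top.ne hc
        (hfA.mono_set hball)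
    _ ≤ ∫ y in A, f y ∂μ :=
      setIntegral_mono_set hfA ((ae_restrict_iff' hA).2 (.of_forall hf₀)) hball.eventuallyLE

theorem infDist_le_of_ball_half_infDist_subset {s A : Set E} {α : ℝ} (hα : 0 < α)
    (hint : IntegrableOn (fun y ↦ infDist y s ^ α) A μ) (hA : MeasurableSet A) {x : E}
    (hball : ball x (infDist x s / 2) ⊆ A) :
    infDist x s ≤ 2 * ((μ.real (ball 0 1))⁻¹ * ∫ y in A, infDist y s ^ α ∂μ) ^
      ((finrank ℝ E : ℝ) + α)⁻¹ := by
  set t := infDist x s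
  have hω : 0 < μ.real (ball 0 1) :=
    ENNReal.toReal_pos (measure_ball_pos μ 0 one_pos).ne' measure_ball_lt_top.ne
  have hI : 0 ≤ ∫ y in A, infDist y s ^ α ∂μ :=
    integral_nonneg fun y ↦ Real.rpow_nonneg infDist_nonneg α
  rcases (infDist_nonneg : 0 ≤ t).eq_or_lt with ht | ht
  · rw [show t = 0 from ht.symm]
    positivity
  have hmass : (t / 2) ^ α * ((t / 2) ^ finrank ℝ E * μ.real (ball 0 1)) ≤
      ∫ y in A, infDist y s ^ α ∂μ :=
    const_mul_measureReal_ball_le_setIntegral μ hint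
      (fun y _ ↦ Real.rpow_nonneg infDist_nonneg α) hA (half_pos ht) hball fun y hy ↦
        Real.rpow_le_rpow (half_pos ht).le (by linarith [sub_le_infDist_of_mem_ball (s := s) hy])
          hα.le
  have hpow : (t / 2) ^ ((finrank ℝ E : ℝ) + α) ≤
      (μ.real (ball 0 1))⁻¹ * ∫ y in A, infDist y s ^ α ∂μ := by
    rw [le_inv_mul_iff₀ hω, Real.rpow_add (half_pos ht), Real.rpow_natCast]
    linarith
  have := (Real.le_rpow_inv_iff_of_pos (half_pos ht).le (by positivity) (by positivity)).2 hpow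
  linarith

end AddHaar

theorem distance_decay_of_integrable_general {N : ℕ} (α : ℝ) (hα : 0 < α)
    (Ω : Set (EuclideanSpace ℝ (Fin N)))
    (hint : MeasureTheory.Integrable (fun x : EuclideanSpace ℝ (Fin N) =>
      Metric.infDist x Ωᶜ ^ α))
    (rΩ : ℝ) (hr : IsLUB (Set.range fun x => Metric.infDist x Ωᶜ) rΩ) :
    (∀ R : ℝ, rΩ / 2 ≤ R → ∀ x : EuclideanSpace ℝ (Fin N), R + rΩ / 2 < ‖x‖ →
      Metric.infDist x Ωᶜ ≤
        2 * ((MeasureTheory.volume (Metric.ball (0 : EuclideanSpace ℝ (Fin N)) 1)).toReal⁻¹ *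
          ∫ y in (Metric.ball (0 : EuclideanSpace ℝ (Fin N)) R)ᶜ,
            Metric.infDist y Ωᶜ ^ α) ^ (((N : ℝ) + α)⁻¹)) ∧
    (∀ ε > (0:ℝ), ∃ R : ℝ, ∀ x : EuclideanSpace ℝ (Fin N), R < ‖x‖ →
      Metric.infDist x Ωᶜ < ε) := by
  set ω := (volume (ball (0 : EuclideanSpace ℝ (Fin N)) 1)).toReal
  let bound (R : ℝ) : ℝ :=
    2 * (ω⁻¹ * ∫ y in (ball 0 R)ᶜ, infDist y Ωᶜ ^ α) ^ ((N : ℝ) + α)⁻¹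
  have hbound (R : ℝ) (x : EuclideanSpace ℝ (Fin N)) (hx : R + rΩ / 2 < ‖x‖) :
      infDist x Ωᶜ ≤ bound R := by
    have hsub : ball x (infDist x Ωᶜ / 2) ⊆ (ball 0 R)ᶜ :=
      (ball_disjoint_ball (by linarith [hr.1 (mem_range_self x), dist_zero_right x]))
        |>.subset_compl_right
    simpa [finrank_euclideanSpace_fin, measureReal_def] using
      infDist_le_of_ball_half_infDist_subset volume hα hint.integrableOn
        measurableSet_ball.compl hsub
  have hdecay : Tendsto bound atTop (𝓝 0) := by
    have hNα : ((N : ℝ) + α)⁻¹ ≠ 0 := by positivity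
    simpa [Real.zero_rpow hNα] using
      (((tendsto_setIntegral_compl_ball_atTop hint 0).const_mul ω⁻¹).rpow_const
        (p := ((N : ℝ) + α)⁻¹) (Or.inr (by positivity))).const_mul 2
  refine ⟨fun R _ ↦ hbound R, fun ε hε ↦ ?_⟩
  obtain ⟨R, hR⟩ := (hdecay.eventually (gt_mem_nhds hε)).exists
  exact ⟨R + rΩ / 2, fun x hx ↦ (hbound R x hx).trans_lt hR⟩

/-- If `Ω ⊊ ℝ^N` is open and `d_Ω^α ∈ L¹(ℝ^N)` (the distance to `∂Ω` extended by zero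
outside `Ω`) for some `0 < α < ∞`, then for every `R ≥ r_Ω/2` and every `x` with
`|x| > R + r_Ω/2` one has
`d_Ω(x) ≤ 2 (ω_N⁻¹ ∫_{ℝ^N \ B_R} d_Ω^α)^{1/(N+α)}`; in particular `Ω` is quasibounded. -/
theorem distance_decay_of_integrable {N : ℕ} (hN : 0 < N) (α : ℝ) (hα : 0 < α)
    (Ω : Set (EuclideanSpace ℝ (Fin N))) (hΩ : IsOpen Ω) (hne : Ω ≠ Set.univ)
    (hint : MeasureTheory.Integrable (fun x : EuclideanSpace ℝ (Fin N) =>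
      Metric.infDist x Ωᶜ ^ α))
    (rΩ : ℝ) (hr : IsLUB (Set.range fun x => Metric.infDist x Ωᶜ) rΩ) :
    (∀ R : ℝ, rΩ / 2 ≤ R → ∀ x : EuclideanSpace ℝ (Fin N), R + rΩ / 2 < ‖x‖ →
      Metric.infDist x Ωᶜ ≤
        2 * ((MeasureTheory.volume (Metric.ball (0 : EuclideanSpace ℝ (Fin N)) 1)).toReal⁻¹ *
          ∫ y in (Metric.ball (0 : EuclideanSpace ℝ (Fin N)) R)ᶜ,
            Metric.infDist y Ωᶜ ^ α) ^ (((N : ℝ) + α)⁻¹)) ∧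
    (∀ ε > (0:ℝ), ∃ R : ℝ, ∀ x : EuclideanSpace ℝ (Fin N), R < ‖x‖ →
      Metric.infDist x Ωᶜ < ε) :=
  distance_decay_of_integrable_general α hα Ω hint rΩ hr
end

section
/- For 1 < p < ∞ and 1 ≤ q < ∞, the sharp one-dimensional Poincaré–Sobolev constant π_{p,q} := (inf{∫₀¹|φ'|^p : φ ∈ C_0^∞((0,1)), ‖φ‖_{L^q(0,1)} = 1})^{1/p} satisfies π_{p,q} ≥ 2^{1-1/p} (q(1-1/p)+1)^{1/q}. -/
/-!
If `φ` vanishes at `0` and `1`, the fundamental theorem of calculus and Hölder's inequality give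
`|φ t| ≤ ‖φ'‖_p · min(t, 1 - t)^(1 - 1/p)`. Raising this to the power `q` and integrating, with
`∫₀¹ min(t, 1 - t)^α = (2^α (α + 1))⁻¹` for `α = q (1 - 1/p)`, gives the Poincaré–Sobolev inequality
`2^α (α + 1) ‖φ‖_q^q ≤ ‖φ'‖_p^q`. It bounds every element of the set whose infimum is taken, and
that set is nonempty (it contains a rescaled bump function), so the bound passes to the infimum.
-/

open Set MeasureTheory intervalIntegral
open scoped Interval

theorem integral_abs_le_Lp_mul_length_rpow {g : ℝ → ℝ} (hg : Continuous g) {p a b : ℝ}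
    (hp : 1 < p) (hab : a ≤ b) :
    ∫ x in a..b, |g x| ≤ (∫ x in a..b, |g x| ^ p) ^ (1 / p) * (b - a) ^ (1 - 1 / p) := by
  have hpq : p.HolderConjugate (p / (p - 1)) := (Real.holderConjugate_iff_eq_conjExponent hp).2 rfl
  obtain ⟨C, hC⟩ := isCompact_Icc.exists_bound_of_continuousOn (hg.abs.continuousOn (s := Icc a b))
  have hmem : MemLp (fun x ↦ |g x|) (ENNReal.ofReal p) (volume.restrict (Ioc a b)) :=
    .of_bound hg.abs.aestronglyMeasurable C
      (ae_restrict_of_forall_mem measurableSet_Ioc fun x hx ↦ hC x (Ioc_subset_Icc_self hx))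
  have := integral_mul_le_Lp_mul_Lq_of_nonneg hpq (.of_forall fun x ↦ abs_nonneg (g x))
    (.of_forall fun _ ↦ zero_le_one) hmem (memLp_const (1 : ℝ))
  simpa only [mul_one, Real.one_rpow, ← integral_of_le hab, intervalIntegral.integral_const,
    smul_eq_mul, one_div (p / (p - 1)), inv_div, ← hpq.one_sub_inv, one_div] using this

theorem abs_sub_le_Lp_deriv_mul_rpow {φ : ℝ → ℝ} (hφ : ContDiff ℝ 1 φ) {p s t : ℝ}
    (hp : 1 < p) (hst : s ≤ t) :
    |φ t - φ s| ≤ (∫ x in s..t, |deriv φ x| ^ p) ^ (1 / p) * (t - s) ^ (1 - 1 / p) := by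
  have hφ' : Continuous (deriv φ) := hφ.continuous_deriv le_rfl
  calc |φ t - φ s| = |∫ x in s..t, deriv φ x| := by
        rw [integral_deriv_eq_sub (fun x _ ↦ hφ.differentiable one_ne_zero x)
          (hφ'.intervalIntegrable _ _)]
    _ ≤ ∫ x in s..t, |deriv φ x| := abs_integral_le_integral_abs hst
    _ ≤ _ := integral_abs_le_Lp_mul_length_rpow hφ' hp hst

theorem abs_le_Lp_deriv_mul_min_rpow {φ : ℝ → ℝ} (hφ : ContDiff ℝ 1 φ) {p a b t : ℝ}
    (hp : 1 < p) (ha : φ a = 0) (hb : φ b = 0) (ht : t ∈ Icc a b) :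
    |φ t| ≤ (∫ x in a..b, |deriv φ x| ^ p) ^ (1 / p) * min (t - a) (b - t) ^ (1 - 1 / p) := by
  have hint : Continuous fun x ↦ |deriv φ x| ^ p :=
    (hφ.continuous_deriv le_rfl).abs.rpow_const fun _ ↦ Or.inr (by linarith)
  have hmono : ∀ c d, a ≤ c → c ≤ d → d ≤ b →
      (∫ x in c..d, |deriv φ x| ^ p) ^ (1 / p) ≤ (∫ x in a..b, |deriv φ x| ^ p) ^ (1 / p) :=
    fun c d hac hcd hdb ↦ Real.rpow_le_rpow
      (integral_nonneg hcd fun x _ ↦ by positivity)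
      (integral_mono_interval hac hcd hdb (.of_forall fun x ↦ by positivity)
        (hint.intervalIntegrable a b))
      (by positivity)
  rcases le_total (t - a) (b - t) with h | h
  · rw [min_eq_left h, ← sub_zero (φ t), ← ha]
    exact (abs_sub_le_Lp_deriv_mul_rpow hφ hp ht.1).trans
      (mul_le_mul_of_nonneg_right (hmono a t le_rfl ht.1 ht.2)
        (Real.rpow_nonneg (sub_nonneg.2 ht.1) _))
  · rw [min_eq_right h, ← abs_neg, ← zero_sub, ← hb]
    exact (abs_sub_le_Lp_deriv_mul_rpow hφ hp ht.2).trans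
      (mul_le_mul_of_nonneg_right (hmono t b ht.1 ht.2 le_rfl)
        (Real.rpow_nonneg (sub_nonneg.2 ht.2) _))

theorem integral_min_sub_rpow {α : ℝ} (hα : -1 < α) :
    ∫ t in (0 : ℝ)..1, min t (1 - t) ^ α = (2 ^ α * (α + 1))⁻¹ := by
  have hleft : EqOn (fun t : ℝ ↦ t ^ α) (fun t ↦ min t (1 - t) ^ α) [[0, 1 / 2]] := by
    intro t ht
    rw [uIcc_of_le (by norm_num)] at ht
    simp only [min_eq_left (show t ≤ 1 - t by linarith [ht.2])]
  have hright : EqOn (fun t : ℝ ↦ (1 - t) ^ α) (fun t ↦ min t (1 - t) ^ α) [[1 / 2, 1]] := by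
    intro t ht
    rw [uIcc_of_le (by norm_num)] at ht
    simp only [min_eq_right (show 1 - t ≤ t by linarith [ht.1])]
  have hint : IntervalIntegrable (fun t : ℝ ↦ t ^ α) volume 0 (1 / 2) := intervalIntegrable_rpow' hα
  have hhalf : ∫ t in (0 : ℝ)..1 / 2, t ^ α = (1 / 2) ^ (α + 1) / (α + 1) := by
    rw [integral_rpow (.inl hα), Real.zero_rpow (by linarith), sub_zero]
  have hint' : IntervalIntegrable (fun t : ℝ ↦ (1 - t) ^ α) volume (1 / 2) 1 := by
    convert (hint.comp_sub_left 1).symm using 1 <;> norm_num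
  rw [← integral_add_adjacent_intervals (hint.congr (hleft.mono uIoc_subset_uIcc))
      (hint'.congr (hright.mono uIoc_subset_uIcc)),
    ← integral_congr hleft, ← integral_congr hright, integral_comp_sub_left (fun t ↦ t ^ α),
    sub_self, show (1 : ℝ) - 1 / 2 = 1 / 2 by norm_num, hhalf,
    Real.div_rpow zero_le_one zero_le_two, Real.one_rpow, Real.rpow_add_one two_ne_zero]
  field_simp
  ring

theorem poincare_sobolev_unitInterval {φ : ℝ → ℝ} (hφ : ContDiff ℝ 1 φ) (h0 : φ 0 = 0)
    (h1 : φ 1 = 0) {p q : ℝ} (hp : 1 < p) (hq : 0 < q) :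
    2 ^ (q * (1 - 1 / p)) * (q * (1 - 1 / p) + 1) * ∫ t in (0 : ℝ)..1, |φ t| ^ q ≤
      (∫ t in (0 : ℝ)..1, |deriv φ t| ^ p) ^ (q / p) := by
  set K := ∫ t in (0 : ℝ)..1, |deriv φ t| ^ p
  set α := q * (1 - 1 / p)
  have hK : 0 ≤ K := integral_nonneg zero_le_one fun t _ ↦ by positivity
  have hα : 0 ≤ α := mul_nonneg hq.le (by rw [sub_nonneg, div_le_one (by linarith)]; exact hp.le)
  have hpointwise : ∀ t ∈ Icc (0 : ℝ) 1, |φ t| ^ q ≤ K ^ (q / p) * min t (1 - t) ^ α := by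
    intro t ht
    have hmin : 0 ≤ min t (1 - t) := le_min ht.1 (sub_nonneg.2 ht.2)
    calc |φ t| ^ q ≤ (K ^ (1 / p) * min t (1 - t) ^ (1 - 1 / p)) ^ q := by
          gcongr
          simpa using abs_le_Lp_deriv_mul_min_rpow hφ hp h0 h1 ht
      _ = K ^ (q / p) * min t (1 - t) ^ α := by
          rw [Real.mul_rpow (by positivity) (by positivity), ← Real.rpow_mul hK,
            ← Real.rpow_mul hmin, one_div_mul_eq_div, mul_comm (1 - 1 / p) q]
  have hweight : Continuous fun t : ℝ ↦ K ^ (q / p) * min t (1 - t) ^ α :=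
    continuous_const.mul <|
      (continuous_id.min (continuous_const.sub continuous_id)).rpow_const fun _ ↦ .inr hα
  have hbound : ∫ t in (0 : ℝ)..1, |φ t| ^ q ≤ K ^ (q / p) * (2 ^ α * (α + 1))⁻¹ := by
    rw [← integral_min_sub_rpow (by linarith), ← intervalIntegral.integral_const_mul]
    exact integral_mono_on zero_le_one
      ((hφ.continuous.abs.rpow_const fun _ ↦ .inr hq.le).intervalIntegrable _ _)
      (hweight.intervalIntegrable _ _) hpointwise
  have hA : 0 < 2 ^ α * (α + 1) := by positivity
  calc 2 ^ α * (α + 1) * ∫ t in (0 : ℝ)..1, |φ t| ^ q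
      ≤ 2 ^ α * (α + 1) * (K ^ (q / p) * (2 ^ α * (α + 1))⁻¹) := by gcongr
    _ = K ^ (q / p) := by field_simp

theorem integral_abs_rpow_normalize {X : Type*} [MeasurableSpace X] {μ : Measure X} {f : X → ℝ}
    {q : ℝ} (hq : q ≠ 0) (hf : 0 < ∫ x, |f x| ^ q ∂μ) :
    ∫ x, |(∫ y, |f y| ^ q ∂μ) ^ (-1 / q) * f x| ^ q ∂μ = 1 := by
  set I := ∫ y, |f y| ^ q ∂μ
  have hscale : ∀ x, |I ^ (-1 / q) * f x| ^ q = I⁻¹ * |f x| ^ q := fun x ↦ by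
    rw [abs_mul, abs_of_pos (Real.rpow_pos_of_pos hf _),
      Real.mul_rpow (by positivity) (abs_nonneg _), ← Real.rpow_mul hf.le, div_mul_cancel₀ _ hq,
      Real.rpow_neg_one]
  rw [integral_congr_ae (.of_forall hscale), MeasureTheory.integral_const_mul,
    inv_mul_cancel₀ hf.ne']

theorem exists_contDiff_tsupport_subset_Ioo_integral_abs_rpow_eq_one {a b q : ℝ} (hab : a < b)
    (hq : 0 < q) :
    ∃ φ : ℝ → ℝ, ContDiff ℝ (⊤ : ℕ∞) φ ∧ HasCompactSupport φ ∧ tsupport φ ⊆ Ioo a b ∧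
      ∫ t in Ioo a b, |φ t| ^ q = 1 := by
  let f : ContDiffBump ((a + b) / 2) := ⟨(b - a) / 4, (b - a) / 3, by linarith, by linarith⟩
  have hts : tsupport f ⊆ Ioo a b := by
    rw [f.tsupport_eq, Real.closedBall_eq_Icc]
    exact Icc_subset_Ioo (by simp only [f]; linarith) (by simp only [f]; linarith)
  have hI : 0 < ∫ t in Ioo a b, |f t| ^ q := by
    have hvanish (t : ℝ) (ht : t ∉ Ioo a b) : |f t| ^ q = 0 := by
      simp [image_eq_zero_of_notMem_tsupport (mt (@hts t) ht), hq.ne']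
    rw [setIntegral_eq_integral_of_forall_compl_eq_zero hvanish]
    refine (f.continuous.abs.rpow_const fun _ ↦ .inr hq.le)
      |>.integral_pos_of_hasCompactSupport_nonneg_nonzero
        (f.hasCompactSupport.comp_left (g := fun y : ℝ ↦ |y| ^ q) (by simp [hq.ne']))
        (fun t ↦ by positivity) (x := (a + b) / 2) ?_
    simp [f.one_of_mem_closedBall (Metric.mem_closedBall_self f.rIn_pos.le)]
  refine ⟨fun t ↦ (∫ t in Ioo a b, |f t| ^ q) ^ (-1 / q) * f t, contDiff_const.mul f.contDiff,
    f.hasCompactSupport.mul_left, tsupport_mul_subset_right.trans hts,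
    integral_abs_rpow_normalize hq.ne' hI⟩

theorem poincare_sobolev_Ioo_of_normalized {φ : ℝ → ℝ} (hφ : ContDiff ℝ 1 φ)
    (hsupp : tsupport φ ⊆ Ioo 0 1) {p q : ℝ} (hp : 1 < p) (hq : 0 < q)
    (hnorm : ∫ t in Ioo (0 : ℝ) 1, |φ t| ^ q = 1) :
    (2 ^ (q * (1 - 1 / p)) * (q * (1 - 1 / p) + 1)) ^ (p / q) ≤
      ∫ t in Ioo (0 : ℝ) 1, |deriv φ t| ^ p := by
  have hvanish (t : ℝ) (ht : t ∉ Ioo 0 1) : φ t = 0 :=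
    image_eq_zero_of_notMem_tsupport (mt (@hsupp t) ht)
  have hα : 0 < q * (1 - 1 / p) := mul_pos hq (sub_pos.2 ((div_lt_one (by linarith)).2 hp))
  have hPS := poincare_sobolev_unitInterval hφ (hvanish 0 (by simp)) (hvanish 1 (by simp)) hp hq
  simp only [integral_of_le zero_le_one, integral_Ioc_eq_integral_Ioo, hnorm, mul_one] at hPS
  rw [← inv_div p q] at hPS
  exact (Real.le_rpow_inv_iff_of_pos (by positivity)
    (setIntegral_nonneg measurableSet_Ioo fun t _ ↦ by positivity) (by positivity)).1 hPS

/-- Lower bound for the sharp one-dimensional Poincaré–Sobolev constant: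
`π_{p,q} = (inf {∫₀¹ |φ'|^p : φ ∈ C_0^∞((0,1)), ‖φ‖_{L^q(0,1)} = 1})^{1/p}`
satisfies `π_{p,q} ≥ 2^{1-1/p} (q(1-1/p)+1)^{1/q}` for `1 < p < ∞`, `1 ≤ q < ∞`. -/
theorem one_dim_poincare_sobolev_lower_bound (p q : ℝ) (hp : 1 < p) (hq : 1 ≤ q) :
    2 ^ (1 - 1/p) * (q * (1 - 1/p) + 1) ^ (1/q) ≤
      (sInf {E : ℝ | ∃ φ : ℝ → ℝ, ContDiff ℝ (⊤ : ℕ∞) φ ∧ HasCompactSupport φ ∧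
        tsupport φ ⊆ Set.Ioo 0 1 ∧ (∫ t in Set.Ioo (0:ℝ) 1, |φ t| ^ q) = 1 ∧
        E = ∫ t in Set.Ioo (0:ℝ) 1, |deriv φ t| ^ p}) ^ (1/p) := by
  have hq0 : 0 < q := by linarith
  set α := q * (1 - 1 / p)
  have hα : 0 < α := mul_pos hq0 (sub_pos.2 ((div_lt_one (by linarith)).2 hp))
  have hA : 0 < 2 ^ α * (α + 1) := by positivity
  obtain ⟨φ₀, hφ₀, hcs₀, hsupp₀, hnorm₀⟩ :=
    exists_contDiff_tsupport_subset_Ioo_integral_abs_rpow_eq_one zero_lt_one hq0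
  calc 2 ^ (1 - 1 / p) * (α + 1) ^ (1 / q) = ((2 ^ α * (α + 1)) ^ (p / q)) ^ (1 / p) := by
        rw [← Real.rpow_mul hA.le, show p / q * (1 / p) = 1 / q by field_simp,
          Real.mul_rpow (by positivity) (by positivity), ← Real.rpow_mul zero_le_two]
        congr 2
        simp only [α]
        field_simp
    _ ≤ _ := by
        gcongr
        exact le_csInf ⟨_, φ₀, hφ₀, hcs₀, hsupp₀, hnorm₀, rfl⟩
          fun E ⟨φ, hφ, _, hsupp, hnorm, hE⟩ ↦
            hE ▸ poincare_sobolev_Ioo_of_normalized (hφ.of_le (by simp)) hsupp hp hq0 hnorm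
end

section
/- For p > N and α_p = 1 - N/p, the sharp Morrey constant 𝔪_p(ℝ^N) = inf{∫_{ℝ^N}|∇u|^p dx : u ∈ C_0^∞(ℝ^N), [u]_{C^{0,α_p}(ℝ^N)} = 1} satisfies 𝔪_p(ℝ^N) ≤ N ω_N ((p-N)/(p-1))^{p-1}. -/
/-!
The extremal profile is `(1 - |x|^β)₊` with `β = (p - N)/(p - 1)`. Its gradient has modulus
`β |x|^(β-1)` on the unit ball, so its energy is `N ω_N β^p ∫₀¹ r^(N-1+(β-1)p) dr = N ω_N β^(p-1)`
because `N + (β - 1)p = β`, and its Hölder quotient between `0` and a unit vector is `1`.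
It is not smooth, so we use `x ↦ P_η((1 + d)^(β/2) - (|x|² + d)^(β/2))`, where `P_η` is a smooth
positive part with slope in `[0, 1]`: the gradient bound survives, the quotient between `0` and a
unit vector is at least `1 - d^(β/2) - η`, and normalising the seminorm to `1` and letting
`d, η → 0` gives the bound.
-/

open Set Metric MeasureTheory

/-- The sharp Morrey constant on `ℝ^N`:
`𝔪_p(ℝ^N) = inf {∫ |∇u|^p : u ∈ C_0^∞(ℝ^N), [u]_{C^{0,α_p}} = 1}`, `α_p = 1 - N/p`. -/
noncomputable def morreyConst (N : ℕ) (p : ℝ) : ℝ :=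
  sInf {E : ℝ | ∃ u : EuclideanSpace ℝ (Fin N) → ℝ, ContDiff ℝ (⊤ : ℕ∞) u ∧
    HasCompactSupport u ∧ holderSem (1 - (N : ℝ)/p) Set.univ u = 1 ∧
    E = ∫ x : EuclideanSpace ℝ (Fin N), ‖gradient u x‖ ^ p}

open Filter Topology

section HolderSeminorm

variable {N : ℕ} {α : ℝ} {S : Set (EuclideanSpace ℝ (Fin N))} {u : EuclideanSpace ℝ (Fin N) → ℝ}

lemma le_holderSem {x y : EuclideanSpace ℝ (Fin N)} (hx : x ∈ S) (hy : y ∈ S) :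
    ENNReal.ofReal (|u x - u y| / ‖x - y‖ ^ α) ≤ holderSem α S u :=
  le_iSup₂_of_le x hx (le_iSup₂_of_le y hy le_rfl)

lemma holderSem_le {C : ℝ} (h : ∀ x ∈ S, ∀ y ∈ S, |u x - u y| / ‖x - y‖ ^ α ≤ C) :
    holderSem α S u ≤ ENNReal.ofReal C :=
  iSup₂_le fun x hx => iSup₂_le fun y hy => ENNReal.ofReal_le_ofReal (h x hx y hy)

lemma holderSem_const_mul (k : ℝ) :
    holderSem α S (fun x => k * u x) = ENNReal.ofReal |k| * holderSem α S u := by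
  simp only [holderSem, ENNReal.mul_iSup]
  refine iSup_congr fun x => iSup_congr fun _ => iSup_congr fun y => iSup_congr fun _ => ?_
  rw [← ENNReal.ofReal_mul (abs_nonneg k), ← mul_sub, abs_mul, mul_div_assoc]

lemma holderSem_ne_top (hα₀ : 0 ≤ α) (hα₁ : α ≤ 1) (hu : ContDiff ℝ 1 u)
    (hs : HasCompactSupport u) : holderSem α S u ≠ ⊤ := by
  obtain ⟨K, hK⟩ := hu.lipschitzWith_of_hasCompactSupport hs one_ne_zero
  obtain ⟨M, hM⟩ := hs.exists_bound_of_continuous hu.continuous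
  refine ne_top_of_le_ne_top ENNReal.ofReal_ne_top (holderSem_le (C := max (K : ℝ) (2 * M)) ?_)
  intro x _ y _
  have hxy := hK.dist_le_mul x y
  rw [Real.dist_eq, dist_eq_norm] at hxy
  rcases le_total ‖x - y‖ 1 with hle | hge
  · rcases (norm_nonneg (x - y)).eq_or_lt with h0 | hpos
    · obtain rfl : x = y := sub_eq_zero.1 (norm_eq_zero.1 h0.symm)
      simp [le_max_of_le_left K.coe_nonneg]
    · rw [div_le_iff₀ (Real.rpow_pos_of_pos hpos α)]
      calc |u x - u y| ≤ K * ‖x - y‖ := hxy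
        _ ≤ max (K : ℝ) (2 * M) * ‖x - y‖ ^ α := by
          gcongr
          · exact le_max_left _ _
          · exact Real.self_le_rpow_of_le_one (norm_nonneg _) hle hα₁
  · calc |u x - u y| / ‖x - y‖ ^ α ≤ |u x - u y| :=
          div_le_self (abs_nonneg _) (Real.one_le_rpow hge hα₀)
      _ ≤ 2 * M := by
          have := hM x; have := hM y
          rw [Real.norm_eq_abs] at *
          linarith [abs_sub (u x) (u y)]
      _ ≤ max (K : ℝ) (2 * M) := le_max_right _ _

end HolderSeminorm

lemma norm_gradient {F : Type*} [NormedAddCommGroup F] [InnerProductSpace ℝ F] [CompleteSpace F]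
    (f : F → ℝ) (x : F) : ‖gradient f x‖ = ‖fderiv ℝ f x‖ :=
  (InnerProductSpace.toDual ℝ F).symm.norm_map _

lemma morreyConst_le_integral_div {N : ℕ} {p : ℝ} {u : EuclideanSpace ℝ (Fin N) → ℝ}
    (hu : ContDiff ℝ (⊤ : ℕ∞) u) (hs : HasCompactSupport u)
    (hpos : 0 < (holderSem (1 - (N : ℝ) / p) univ u).toReal) :
    morreyConst N p ≤ (∫ x, ‖gradient u x‖ ^ p) /
      (holderSem (1 - (N : ℝ) / p) univ u).toReal ^ p := by
  set H := holderSem (1 - (N : ℝ) / p) univ u with hH_def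
  obtain ⟨hH₀, hH⟩ := ENNReal.toReal_pos_iff.1 hpos
  have hnormalized : holderSem (1 - (N : ℝ) / p) univ (fun x => H.toReal⁻¹ * u x) = 1 := by
    rw [holderSem_const_mul, ← hH_def, abs_of_pos (inv_pos.2 hpos), ENNReal.ofReal_inv_of_pos hpos,
      ENNReal.ofReal_toReal hH.ne, ENNReal.inv_mul_cancel hH₀.ne' hH.ne]
  have hgrad (x) : ‖gradient (fun x => H.toReal⁻¹ * u x) x‖ ^ p =
      ‖gradient u x‖ ^ p / H.toReal ^ p := by
    rw [norm_gradient, norm_gradient, fderiv_const_mul (hu.differentiable (by simp) x), norm_smul,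
      Real.norm_of_nonneg (inv_nonneg.2 hpos.le), Real.mul_rpow (inv_nonneg.2 hpos.le)
      (norm_nonneg _), Real.inv_rpow hpos.le, inv_mul_eq_div]
  calc morreyConst N p ≤ ∫ x, ‖gradient (fun x => H.toReal⁻¹ * u x) x‖ ^ p :=
        csInf_le ⟨0, fun E ⟨v, _, _, _, hE⟩ => hE ▸ integral_nonneg fun x => by positivity⟩
          ⟨_, contDiff_const.mul hu, hs.mul_left, hnormalized, rfl⟩
    _ = (∫ x, ‖gradient u x‖ ^ p) / H.toReal ^ p := by
        simp only [hgrad, integral_div]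

section SmoothPosPart

noncomputable def smoothPosPart (η t : ℝ) : ℝ := ∫ s in (0 : ℝ)..t, Real.smoothTransition (s / η)

variable {η : ℝ}

lemma hasDerivAt_smoothPosPart (t : ℝ) :
    HasDerivAt (smoothPosPart η) (Real.smoothTransition (t / η)) t :=
  ((Real.smoothTransition.continuous.comp (continuous_id.div_const η)).integral_hasStrictDerivAt
    0 t).hasDerivAt

lemma contDiff_smoothPosPart : ContDiff ℝ (⊤ : ℕ∞) (smoothPosPart η) := by
  refine contDiff_infty_iff_deriv.2 ⟨fun t => (hasDerivAt_smoothPosPart t).differentiableAt, ?_⟩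
  rw [funext fun t => (hasDerivAt_smoothPosPart (η := η) t).deriv]
  exact Real.smoothTransition.contDiff.comp (contDiff_id.div_const η)

lemma smoothPosPart_of_nonpos (hη : 0 ≤ η) {t : ℝ} (ht : t ≤ 0) : smoothPosPart η t = 0 := by
  rw [smoothPosPart, intervalIntegral.integral_congr (g := fun _ => 0),
    intervalIntegral.integral_zero]
  intro s hs
  rw [uIcc_of_ge ht] at hs
  exact Real.smoothTransition.zero_of_nonpos (div_nonpos_of_nonpos_of_nonneg hs.2 hη)

lemma smoothPosPart_nonneg (hη : 0 ≤ η) (t : ℝ) : 0 ≤ smoothPosPart η t := by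
  rcases le_total t 0 with ht | ht
  · rw [smoothPosPart_of_nonpos hη ht]
  · exact intervalIntegral.integral_nonneg ht fun s _ => Real.smoothTransition.nonneg _

lemma sub_le_smoothPosPart (hη : 0 < η) (t : ℝ) : t - η ≤ smoothPosPart η t := by
  rcases le_total t η with ht | ht
  · linarith [smoothPosPart_nonneg hη.le t]
  have hint (a b : ℝ) : IntervalIntegrable (fun s => Real.smoothTransition (s / η)) volume a b :=
    (Real.smoothTransition.continuous.comp (continuous_id.div_const η)).intervalIntegrable a b
  have hslope : ∫ s in η..t, Real.smoothTransition (s / η) = t - η := by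
    rw [intervalIntegral.integral_congr (g := fun _ => 1), intervalIntegral.integral_const,
      smul_eq_mul, mul_one]
    intro s hs
    rw [uIcc_of_le ht] at hs
    exact Real.smoothTransition.one_of_one_le ((one_le_div hη).2 hs.1)
  rw [smoothPosPart, ← intervalIntegral.integral_add_adjacent_intervals (hint 0 η) (hint η t),
    hslope]
  exact le_add_of_nonneg_left (smoothPosPart_nonneg hη.le η)

end SmoothPosPart

section RadialIntegral

variable {E : Type*} [NormedAddCommGroup E] [NormedSpace ℝ E] [FiniteDimensional ℝ E]
  [MeasurableSpace E] [BorelSpace E] {μ : Measure E} [μ.IsAddHaarMeasure]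

open Module

lemma integrableOn_ball_norm_rpow (hE : 0 < finrank ℝ E) {s : ℝ} (hs : -(finrank ℝ E : ℝ) < s) :
    IntegrableOn (fun x : E => ‖x‖ ^ s) (ball 0 1) μ :=
  integrableOn_ball_of_norm_le_rpow hE (C := 1) (α := -s) (by linarith)
    (ae_of_all _ fun x => by simp [abs_of_nonneg (Real.rpow_nonneg (norm_nonneg x) s)])
    (measurable_norm.pow_const s).aestronglyMeasurable

lemma integral_ball_norm_rpow (hE : 0 < finrank ℝ E) {s : ℝ} (hs : -(finrank ℝ E : ℝ) < s) :
    ∫ x in ball (0 : E) 1, ‖x‖ ^ s ∂μ = finrank ℝ E * μ.real (ball 0 1) / (finrank ℝ E + s) := by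
  have hradial : (ball (0 : E) 1).indicator (fun x => ‖x‖ ^ s) =
      fun x => (Iio 1).indicator (fun r : ℝ => r ^ s) ‖x‖ := by
    ext x
    simp only [indicator, mem_ball_zero_iff, mem_Iio]
  have hexp : -1 < (finrank ℝ E : ℝ) - 1 + s := by linarith
  have hone_dim : ∫ r in Ioi (0 : ℝ), r ^ (finrank ℝ E - 1) • (Iio 1).indicator (· ^ s) r =
      1 / (finrank ℝ E + s) := by
    calc ∫ r in Ioi (0 : ℝ), r ^ (finrank ℝ E - 1) • (Iio 1).indicator (· ^ s) r
        = ∫ r in Ioi (0 : ℝ), (Iio 1).indicator (fun r => r ^ ((finrank ℝ E : ℝ) - 1 + s)) r := by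
          refine setIntegral_congr_fun measurableSet_Ioi fun r (hr : 0 < r) => ?_
          by_cases hr1 : r ∈ Iio 1
          · rw [indicator_of_mem hr1, indicator_of_mem hr1, smul_eq_mul, Real.rpow_add hr,
              ← Real.rpow_natCast, Nat.cast_sub hE, Nat.cast_one]
          · rw [indicator_of_notMem hr1, indicator_of_notMem hr1, smul_zero]
      _ = ∫ r in (0 : ℝ)..1, r ^ ((finrank ℝ E : ℝ) - 1 + s) := by
          rw [setIntegral_indicator measurableSet_Iio, Ioi_inter_Iio,
            intervalIntegral.integral_of_le zero_le_one, integral_Ioc_eq_integral_Ioo]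
      _ = 1 / (finrank ℝ E + s) := by
          rw [integral_rpow (Or.inl hexp), Real.one_rpow, Real.zero_rpow (by linarith)]
          ring_nf
  have : Nontrivial E := Module.nontrivial_of_finrank_pos hE
  rw [← integral_indicator measurableSet_ball, hradial, integral_fun_norm_addHaar, hone_dim,
    nsmul_eq_mul, smul_eq_mul]
  ring

end RadialIntegral

section TrialFunction

noncomputable def morreyProfile (β d η s : ℝ) : ℝ :=
  smoothPosPart η ((1 + d) ^ (β / 2) - (s + d) ^ (β / 2))

variable {β d η s : ℝ}

lemma hasDerivAt_morreyProfile (hs : 0 < s + d) :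
    HasDerivAt (morreyProfile β d η)
      (Real.smoothTransition (((1 + d) ^ (β / 2) - (s + d) ^ (β / 2)) / η) *
        -(β / 2 * (s + d) ^ (β / 2 - 1))) s := by
  have hpow := (Real.hasDerivAt_rpow_const (p := β / 2) (Or.inl hs.ne')).comp s
    ((hasDerivAt_id s).add_const d)
  have h := (hasDerivAt_smoothPosPart (η := η) _).comp s (hpow.const_sub ((1 + d) ^ (β / 2)))
  simp only [Function.comp_def, id, mul_one] at h
  exact h

lemma abs_deriv_morreyProfile_le (hβ : 0 ≤ β) (hs : 0 < s + d) :
    |deriv (morreyProfile β d η) s| ≤ β / 2 * (s + d) ^ (β / 2 - 1) := by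
  rw [(hasDerivAt_morreyProfile hs).deriv, abs_mul, abs_neg,
    abs_of_nonneg (Real.smoothTransition.nonneg _), abs_of_nonneg (by positivity)]
  exact mul_le_of_le_one_left (by positivity) (Real.smoothTransition.le_one _)

lemma morreyProfile_eq_zero (hβ : 0 ≤ β) (hd : 0 ≤ d) (hη : 0 ≤ η) (hs : 1 ≤ s) :
    morreyProfile β d η s = 0 :=
  smoothPosPart_of_nonpos hη
    (sub_nonpos.2 (Real.rpow_le_rpow (by positivity) (by linarith) (by positivity)))

lemma deriv_morreyProfile_eq_zero (hβ : 0 ≤ β) (hd : 0 ≤ d) (hη : 0 ≤ η) (hs : 1 ≤ s) :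
    deriv (morreyProfile β d η) s = 0 := by
  rw [(hasDerivAt_morreyProfile (by linarith)).deriv, Real.smoothTransition.zero_of_nonpos
    (div_nonpos_of_nonpos_of_nonneg
      (sub_nonpos.2 (Real.rpow_le_rpow (by positivity) (by linarith) (by positivity))) hη),
    zero_mul]

variable {E : Type*} [NormedAddCommGroup E]

/-- Smoothing of `(1 - ‖x‖^β)₊`: `d > 0` removes the cusp at `0` and `η > 0` the corner on the
unit sphere. -/
noncomputable def morreyTrial (β d η : ℝ) (x : E) : ℝ := morreyProfile β d η (‖x‖ ^ 2)

lemma morreyTrial_eq_zero (hβ : 0 ≤ β) (hd : 0 ≤ d) (hη : 0 ≤ η) {x : E} (hx : 1 ≤ ‖x‖) :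
    morreyTrial β d η x = 0 :=
  morreyProfile_eq_zero hβ hd hη (by nlinarith)

lemma hasCompactSupport_morreyTrial [ProperSpace E] (hβ : 0 ≤ β) (hd : 0 ≤ d) (hη : 0 ≤ η) :
    HasCompactSupport (morreyTrial β d η : E → ℝ) :=
  HasCompactSupport.intro (isCompact_closedBall 0 1) fun x hx =>
    morreyTrial_eq_zero hβ hd hη (le_of_lt (by simpa using hx))

lemma sub_le_morreyTrial_zero (hβ : 0 ≤ β) (hd : 0 ≤ d) (hη : 0 < η) :
    1 - d ^ (β / 2) - η ≤ morreyTrial β d η (0 : E) := by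
  have hone : 1 ≤ (1 + d) ^ (β / 2) := Real.one_le_rpow (by linarith) (by positivity)
  calc 1 - d ^ (β / 2) - η ≤ (1 + d) ^ (β / 2) - (‖(0 : E)‖ ^ 2 + d) ^ (β / 2) - η := by
        rw [norm_zero, zero_pow two_ne_zero, zero_add]
        linarith
    _ ≤ morreyTrial β d η (0 : E) := sub_le_smoothPosPart hη _

variable [InnerProductSpace ℝ E]

lemma hasFDerivAt_morreyTrial (hd : 0 < d) (x : E) :
    HasFDerivAt (morreyTrial β d η)
      (deriv (morreyProfile β d η) (‖x‖ ^ 2) • (2 • innerSL ℝ x)) x :=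
  (hasDerivAt_morreyProfile (by positivity)).differentiableAt.hasDerivAt.comp_hasFDerivAt x
    (hasStrictFDerivAt_norm_sq x).hasFDerivAt

lemma norm_fderiv_morreyTrial (hd : 0 < d) (x : E) :
    ‖fderiv ℝ (morreyTrial β d η) x‖ = |deriv (morreyProfile β d η) (‖x‖ ^ 2)| * (2 * ‖x‖) := by
  rw [(hasFDerivAt_morreyTrial hd x).fderiv, norm_smul, RCLike.norm_nsmul ℝ, innerSL_apply_norm,
    Real.norm_eq_abs]
  norm_num

lemma norm_fderiv_morreyTrial_le (hβ₀ : 0 ≤ β) (hβ₂ : β ≤ 2) (hd : 0 < d) (x : E) :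
    ‖fderiv ℝ (morreyTrial β d η) x‖ ≤ β * ‖x‖ ^ (β - 1) := by
  rw [norm_fderiv_morreyTrial hd]
  rcases (norm_nonneg x).eq_or_lt with hx | hx
  · rw [← hx, mul_zero, mul_zero]
    positivity
  calc |deriv (morreyProfile β d η) (‖x‖ ^ 2)| * (2 * ‖x‖)
      ≤ β / 2 * (‖x‖ ^ 2 + d) ^ (β / 2 - 1) * (2 * ‖x‖) := by
        gcongr
        exact abs_deriv_morreyProfile_le hβ₀ (by positivity)
    _ ≤ β / 2 * (‖x‖ ^ 2) ^ (β / 2 - 1) * (2 * ‖x‖) := by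
        refine mul_le_mul_of_nonneg_right (mul_le_mul_of_nonneg_left ?_ (by positivity))
          (by positivity)
        exact Real.rpow_le_rpow_of_nonpos (pow_pos hx 2) (by linarith) (by linarith)
    _ = β * ‖x‖ ^ (β - 1) := by
        rw [← Real.rpow_natCast, ← Real.rpow_mul hx.le, Nat.cast_ofNat,
          show (2 : ℝ) * (β / 2 - 1) = β - 1 - 1 by ring, Real.rpow_sub_one hx.ne']
        field_simp

lemma fderiv_morreyTrial_eq_zero (hβ : 0 ≤ β) (hd : 0 < d) (hη : 0 ≤ η) {x : E} (hx : 1 ≤ ‖x‖) :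
    fderiv ℝ (morreyTrial β d η) x = 0 := by
  rw [(hasFDerivAt_morreyTrial hd x).fderiv,
    deriv_morreyProfile_eq_zero hβ hd.le hη (by nlinarith), zero_smul]

lemma contDiff_morreyTrial (hd : 0 < d) : ContDiff ℝ (⊤ : ℕ∞) (morreyTrial β d η : E → ℝ) :=
  contDiff_smoothPosPart.comp (contDiff_const.sub
    (((contDiff_norm_sq ℝ).add contDiff_const).rpow_const_of_ne fun x => by positivity))

end TrialFunction

section Energy

variable {E : Type*} [NormedAddCommGroup E] [InnerProductSpace ℝ E] [FiniteDimensional ℝ E]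
  [MeasurableSpace E] [BorelSpace E] {μ : Measure E} [μ.IsAddHaarMeasure] {β d η p : ℝ}

open Module

lemma integral_norm_fderiv_morreyTrial_rpow_le (hE : 0 < finrank ℝ E) (hβ₀ : 0 ≤ β)
    (hβ₂ : β ≤ 2) (hd : 0 < d) (hη : 0 ≤ η) (hp : 0 < p)
    (hexp : -(finrank ℝ E : ℝ) < (β - 1) * p) :
    ∫ x, ‖fderiv ℝ (morreyTrial β d η) x‖ ^ p ∂μ ≤
      β ^ p * (finrank ℝ E * μ.real (ball 0 1) / (finrank ℝ E + (β - 1) * p)) := by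
  have hpointwise (x : E) : ‖fderiv ℝ (morreyTrial β d η) x‖ ^ p ≤
      (ball 0 1).indicator (fun x => β ^ p * ‖x‖ ^ ((β - 1) * p)) x := by
    by_cases hx : x ∈ ball 0 1
    · rw [indicator_of_mem hx, Real.rpow_mul (norm_nonneg x), ← Real.mul_rpow hβ₀ (by positivity)]
      exact Real.rpow_le_rpow (norm_nonneg _) (norm_fderiv_morreyTrial_le hβ₀ hβ₂ hd x) hp.le
    · rw [indicator_of_notMem hx, fderiv_morreyTrial_eq_zero hβ₀ hd hη (by simpa using hx),
        norm_zero, Real.zero_rpow hp.ne']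
  calc ∫ x, ‖fderiv ℝ (morreyTrial β d η) x‖ ^ p ∂μ
      ≤ ∫ x, (ball 0 1).indicator (fun x => β ^ p * ‖x‖ ^ ((β - 1) * p)) x ∂μ :=
        integral_mono_of_nonneg (ae_of_all _ fun x => by positivity)
          ((integrable_indicator_iff measurableSet_ball).2
            ((integrableOn_ball_norm_rpow hE hexp).const_mul _)) (ae_of_all _ hpointwise)
    _ = β ^ p * (finrank ℝ E * μ.real (ball 0 1) / (finrank ℝ E + (β - 1) * p)) := by
        rw [integral_indicator measurableSet_ball, integral_const_mul,
          integral_ball_norm_rpow hE hexp]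

end Energy

lemma ofReal_le_holderSem_morreyTrial {N : ℕ} (hN : 0 < N) (α : ℝ) {β d η : ℝ} (hβ : 0 ≤ β)
    (hd : 0 ≤ d) (hη : 0 < η) :
    ENNReal.ofReal (1 - d ^ (β / 2) - η) ≤
      holderSem α univ (morreyTrial β d η : EuclideanSpace ℝ (Fin N) → ℝ) := by
  set e : EuclideanSpace ℝ (Fin N) := EuclideanSpace.single ⟨0, hN⟩ 1
  have he : ‖e‖ = 1 := by simp [e]
  refine le_trans (ENNReal.ofReal_le_ofReal ?_) (le_holderSem (mem_univ 0) (mem_univ e))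
  rw [zero_sub, norm_neg, he, Real.one_rpow, div_one,
    morreyTrial_eq_zero hβ hd hη.le he.ge, sub_zero]
  exact (sub_le_morreyTrial_zero hβ hd hη).trans (le_abs_self _)

lemma morreyConst_le_div_rpow {N : ℕ} (hN : 0 < N) {p β d η : ℝ} (hp : (N : ℝ) < p)
    (hβ : β = (p - N) / (p - 1)) (hd : 0 < d) (hη : 0 < η) (hgap : 0 < 1 - d ^ (β / 2) - η) :
    morreyConst N p ≤
      N * (volume (ball (0 : EuclideanSpace ℝ (Fin N)) 1)).toReal * β ^ (p - 1) /
        (1 - d ^ (β / 2) - η) ^ p := by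
  have hN₁ : (1 : ℝ) ≤ N := Nat.one_le_cast.2 hN
  have hβ₀ : 0 < β := hβ ▸ div_pos (by linarith) (by linarith)
  have hβ₁ : β ≤ 1 := hβ ▸ (div_le_one (by linarith)).2 (by linarith)
  have hexp : (N : ℝ) + (β - 1) * p = β := by
    have : p - 1 ≠ 0 := by linarith
    rw [hβ]; field_simp; ring
  have hα₀ : 0 ≤ 1 - (N : ℝ) / p := sub_nonneg.2 ((div_le_one (by linarith)).2 hp.le)
  have hα₁ : 1 - (N : ℝ) / p ≤ 1 := sub_le_self _ (div_nonneg (Nat.cast_nonneg N) (by linarith))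
  set u : EuclideanSpace ℝ (Fin N) → ℝ := morreyTrial β d η
  have hu : ContDiff ℝ (⊤ : ℕ∞) u := contDiff_morreyTrial hd
  have hsupp : HasCompactSupport u := hasCompactSupport_morreyTrial hβ₀.le hd.le hη.le
  have hholder : 1 - d ^ (β / 2) - η ≤ (holderSem (1 - (N : ℝ) / p) univ u).toReal :=
    (ENNReal.ofReal_le_iff_le_toReal (holderSem_ne_top hα₀ hα₁ (hu.of_le (by simp)) hsupp)).1
      (ofReal_le_holderSem_morreyTrial hN _ hβ₀.le hd.le hη)
  have henergy : ∫ x, ‖gradient u x‖ ^ p ≤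
      β ^ p * (N * (volume (ball (0 : EuclideanSpace ℝ (Fin N)) 1)).toReal / β) := by
    simp only [norm_gradient]
    have h := integral_norm_fderiv_morreyTrial_rpow_le (μ := volume) (η := η) (p := p)
      (E := EuclideanSpace ℝ (Fin N)) (by simpa using hN) hβ₀.le (by linarith) hd hη.le
      (by linarith) (by simp only [finrank_euclideanSpace_fin]; linarith)
    rwa [finrank_euclideanSpace_fin, hexp, measureReal_def] at h
  calc morreyConst N p ≤ (∫ x, ‖gradient u x‖ ^ p) /
        (holderSem (1 - (N : ℝ) / p) univ u).toReal ^ p :=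
        morreyConst_le_integral_div hu hsupp (hgap.trans_le hholder)
    _ ≤ β ^ p * (N * (volume (ball (0 : EuclideanSpace ℝ (Fin N)) 1)).toReal / β) /
        (1 - d ^ (β / 2) - η) ^ p :=
        div_le_div₀ (by positivity) henergy (by positivity)
          (Real.rpow_le_rpow hgap.le hholder (by linarith))
    _ = _ := by
        rw [Real.rpow_sub_one hβ₀.ne']
        ring

/-- Upper bound for the sharp Morrey constant:
`𝔪_p(ℝ^N) ≤ N ω_N ((p-N)/(p-1))^{p-1}` for `p > N`. -/
theorem morreyConst_upper_bound {N : ℕ} (hN : 0 < N) (p : ℝ) (hp : (N : ℝ) < p) :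
    morreyConst N p ≤
      (N : ℝ) * (MeasureTheory.volume (Metric.ball (0 : EuclideanSpace ℝ (Fin N)) 1)).toReal *
        ((p - N) / (p - 1)) ^ (p - 1) := by
  set β := (p - N) / (p - 1)
  set R := (N : ℝ) * (volume (ball (0 : EuclideanSpace ℝ (Fin N)) 1)).toReal * β ^ (p - 1)
  have hβ : 0 < β := div_pos (by linarith) (by linarith [(Nat.one_le_cast (α := ℝ)).2 hN])
  have hsmall : Tendsto (fun d : ℝ => d ^ (β / 2)) (𝓝[>] 0) (𝓝 0) := by
    simpa [Real.zero_rpow (by positivity : β / 2 ≠ 0)] using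
      (Real.continuousAt_rpow_const 0 (β / 2) (Or.inr (by positivity))).tendsto.mono_left
        nhdsWithin_le_nhds
  have hlim : Tendsto (fun d : ℝ => R / (1 - d ^ (β / 2) - d ^ (β / 2)) ^ p) (𝓝[>] 0) (𝓝 R) := by
    have hden : Tendsto (fun d : ℝ => (1 - d ^ (β / 2) - d ^ (β / 2)) ^ p) (𝓝[>] 0) (𝓝 1) := by
      simpa using (((tendsto_const_nhds (x := (1 : ℝ))).sub hsmall).sub hsmall).rpow_const
        (Or.inl (by norm_num))
    have h := (tendsto_const_nhds (x := R)).div hden one_ne_zero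
    rwa [div_one] at h
  refine ge_of_tendsto hlim ?_
  filter_upwards [self_mem_nhdsWithin, hsmall.eventually (gt_mem_nhds one_half_pos)]
    with d (hd : 0 < d) hd_small
  exact morreyConst_le_div_rpow hN hp rfl hd (by positivity) (by linarith)
end
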